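/- Let C° be a ⊞-closed centred permutation class, let g(z) be the generating function of its non-empty ⊞-indecomposable elements and g_i(z) (i = 1,2,3,4) the generating function of its non-empty ⊞-indecomposables contained entirely in quadrant i. Then the generating function of C° is f(z) = 1/(1 − G(z)) where G(z) = g(z) − g₁(z)g₃(z) − g₂(z)g₄(z). -/

import Mathlib

/-- A *centred permutation*: `vals` is the one-line notation of the filled-in
permutation (length `n+1`), `origin` the index of the origin point. -/
structure CPerm where
  vals : List ℕ
  origin : ℕ
deriving DecidableEq

namespace CPerm

/-- Length of a centred permutation (origin does not count). -/
def len (p : CPerm) : ℕ := p.vals.length - 1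

/-- A genuine centred permutation: one-line notation is a permutation of
`{0, …, N-1}` and the origin index is in range. -/
def IsValid (p : CPerm) : Prop :=
  p.vals ≠ [] ∧ p.origin < p.vals.length ∧ p.vals.Perm (List.range p.vals.length)

def valAt (p : CPerm) (i : ℕ) : ℕ := p.vals.getD i 0

def originVal (p : CPerm) : ℕ := p.valAt p.origin

/-- The box-sum `p ⊞ q`: inflate the origin of `q` by a copy of `p`. -/
def boxSum (p q : CPerm) : CPerm :=
  let N := p.vals.length
  let v := q.originVal
  let shift : ℕ → ℕ := fun u => if u < v then u else u + (N - 1)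
  ⟨(q.vals.take q.origin).map shift ++ p.vals.map (· + v) ++
      (q.vals.drop (q.origin + 1)).map shift,
    q.origin + p.origin⟩

/-- The trivial centred permutation (origin only, length 0). -/
def trivial : CPerm := ⟨[0], 0⟩

/-- Iterated box-sum `σ₁ ⊞ σ₂ ⊞ ⋯ ⊞ σₙ`. -/
def boxSumList (l : List CPerm) : CPerm := l.foldr boxSum trivial

/-- `p` is ⊞-indecomposable: nonempty and not a box-sum of two strictly smaller
centred permutations. -/
def BoxIndecomposable (p : CPerm) : Prop :=
  1 ≤ p.len ∧
    ¬∃ a b : CPerm, a.IsValid ∧ b.IsValid ∧ 1 ≤ a.len ∧ 1 ≤ b.len ∧ boxSum a b = p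

/-- The non-origin point at index `i` of `p` lies in quadrant `q` (1–4,
numbered anticlockwise). -/
def InQuadrant (p : CPerm) (q : ℕ) (i : ℕ) : Prop :=
  i < p.vals.length ∧ i ≠ p.origin ∧
    ((q = 1 ∧ p.origin < i ∧ p.originVal < p.valAt i) ∨
     (q = 2 ∧ i < p.origin ∧ p.originVal < p.valAt i) ∨
     (q = 3 ∧ i < p.origin ∧ p.valAt i < p.originVal) ∨
     (q = 4 ∧ p.origin < i ∧ p.valAt i < p.originVal))

/-- All non-origin points of `p` lie in quadrant `q`. -/
def OneQuadrant (p : CPerm) (q : ℕ) : Prop :=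
  ∀ i, i < p.vals.length → i ≠ p.origin → InQuadrant p q i

def OppositeQuadrants (q₁ q₂ : ℕ) : Prop :=
  (q₁ = 1 ∧ q₂ = 3) ∨ (q₁ = 3 ∧ q₂ = 1) ∨ (q₁ = 2 ∧ q₂ = 4) ∨ (q₁ = 4 ∧ q₂ = 2)

/-- Centred pattern containment `p ≤ q` (origins must match up). -/
def PatternLE (p q : CPerm) : Prop :=
  ∃ f : ℕ → ℕ,
    (∀ i j, i < p.vals.length → j < p.vals.length → i < j → f i < f j) ∧
    (∀ i, i < p.vals.length → f i < q.vals.length) ∧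
    f p.origin = q.origin ∧
    (∀ i j, i < p.vals.length → j < p.vals.length →
      (p.valAt i < p.valAt j ↔ q.valAt (f i) < q.valAt (f j)))

/-- A centred permutation class: nonempty, consisting of valid centred
permutations, and downward closed under centred containment. -/
def IsClass (S : Set CPerm) : Prop :=
  S.Nonempty ∧ (∀ p ∈ S, p.IsValid) ∧
    ∀ p q : CPerm, q ∈ S → p.IsValid → PatternLE p q → p ∈ S

/-- `S` is closed under the box-sum. -/
def BoxClosed (S : Set CPerm) : Prop := ∀ p ∈ S, ∀ q ∈ S, boxSum p q ∈ S

/-- Number of centred permutations of length `n` in `S`. -/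
noncomputable def count (S : Set CPerm) (n : ℕ) : ℕ := {p | p ∈ S ∧ p.len = n}.ncard

/-- The single-point centred permutation in quadrant `q`. -/
def mu : ℕ → CPerm
  | 1 => ⟨[0, 1], 0⟩
  | 2 => ⟨[1, 0], 1⟩
  | 3 => ⟨[0, 1], 1⟩
  | 4 => ⟨[1, 0], 0⟩
  | _ => ⟨[0], 0⟩

def AdjacentQuadrants (a b : ℕ) : Prop :=
  (a, b) = (1, 2) ∨ (a, b) = (2, 3) ∨ (a, b) = (3, 4) ∨ (a, b) = (4, 1) ∨
  (a, b) = (2, 1) ∨ (a, b) = (3, 2) ∨ (a, b) = (4, 3) ∨ (a, b) = (1, 4)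

/-- The adjacency condition on a centred class. -/
def AdjacencyCondition (S : Set CPerm) : Prop :=
  (∃! q : ℕ, q ∈ ({1, 2, 3, 4} : Set ℕ) ∧ mu q ∈ S) ∨
    ∃ a b : ℕ, AdjacentQuadrants a b ∧ mu a ∈ S ∧ mu b ∈ S

end CPerm

namespace CPerm

/-- Number of ⊞-indecomposables of length `n` in `S`. -/
noncomputable def indecCount (S : Set CPerm) (n : ℕ) : ℕ :=
  {p | p ∈ S ∧ p.BoxIndecomposable ∧ p.len = n}.ncard

/-- Number of ⊞-indecomposables of length `n` in `S` contained entirely in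
quadrant `q`. -/
noncomputable def indecQuadCount (S : Set CPerm) (q n : ℕ) : ℕ :=
  {p | p ∈ S ∧ p.BoxIndecomposable ∧ p.OneQuadrant q ∧ p.len = n}.ncard

end CPerm

namespace CPerm

lemma valAt_eq_getElem {p : CPerm} {i : ℕ} (h : i < p.vals.length) :
    p.valAt i = p.vals[i] := List.getD_eq_getElem _ _ h

lemma IsValid.length_pos {p : CPerm} (h : p.IsValid) : 0 < p.vals.length :=
  List.length_pos_iff.mpr h.1

lemma IsValid.origin_lt {p : CPerm} (h : p.IsValid) : p.origin < p.vals.length := h.2.1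

lemma IsValid.nodup {p : CPerm} (h : p.IsValid) : p.vals.Nodup :=
  h.2.2.nodup_iff.mpr List.nodup_range

lemma IsValid.valAt_lt {p : CPerm} (h : p.IsValid) {i : ℕ} (hi : i < p.vals.length) :
    p.valAt i < p.vals.length := by
  have hm : p.valAt i ∈ p.vals := by
    rw [valAt_eq_getElem hi]; exact List.getElem_mem _
  simpa using h.2.2.subset hm

lemma IsValid.originVal_lt {p : CPerm} (h : p.IsValid) : p.originVal < p.vals.length :=
  h.valAt_lt h.origin_lt

lemma IsValid.valAt_inj {p : CPerm} (h : p.IsValid) {i j : ℕ}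
    (hi : i < p.vals.length) (hj : j < p.vals.length) (hij : p.valAt i = p.valAt j) :
    i = j := by
  rw [valAt_eq_getElem hi, valAt_eq_getElem hj] at hij
  exact (List.Nodup.getElem_inj_iff h.nodup).mp hij

lemma IsValid.exists_valAt {p : CPerm} (h : p.IsValid) {w : ℕ} (hw : w < p.vals.length) :
    ∃ i, i < p.vals.length ∧ p.valAt i = w := by
  have : w ∈ p.vals := h.2.2.mem_iff.mpr (List.mem_range.mpr hw)
  obtain ⟨i, hi, hieq⟩ := List.getElem_of_mem this
  exact ⟨i, hi, by rw [valAt_eq_getElem hi, hieq]⟩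

lemma perm_range {l : List ℕ} (h1 : l.Nodup) (h2 : ∀ x ∈ l, x < l.length) :
    l.Perm (List.range l.length) := by
  have hsub : l ⊆ List.range l.length := fun x hx => List.mem_range.mpr (h2 x hx)
  exact (h1.subperm hsub).perm_of_length_le (by simp)

lemma cperm_ext {p q : CPerm} (hlen : p.vals.length = q.vals.length)
    (hval : ∀ i, i < p.vals.length → p.valAt i = q.valAt i)
    (ho : p.origin = q.origin) : p = q := by
  cases p with | mk pv po => cases q with | mk qv qo =>
  simp only at hlen hval ho ⊢
  simp only [CPerm.mk.injEq]
  refine ⟨List.ext_getElem hlen ?_, ho⟩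
  intro i h1 h2
  have := hval i h1
  unfold valAt at this
  rwa [List.getD_eq_getElem _ _ h1, List.getD_eq_getElem _ _ h2] at this

/-! ### shift function -/

def shiftF (v m u : ℕ) : ℕ := if u < v then u else u + (m - 1)

lemma shiftF_strictMono (v m : ℕ) : StrictMono (shiftF v m) := by
  intro x y hxy
  unfold shiftF
  split_ifs <;> omega

lemma shiftF_inj {v m x y : ℕ} (h : shiftF v m x = shiftF v m y) : x = y :=
  (shiftF_strictMono v m).injective h

lemma shiftF_lt_or_ge {v m u : ℕ} (hm : 1 ≤ m) (hu : u ≠ v) :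
    shiftF v m u < v ∨ v + m ≤ shiftF v m u := by
  unfold shiftF; split_ifs <;> omega

/-! ### boxSum basics -/

lemma boxSum_origin (a b : CPerm) : (boxSum a b).origin = b.origin + a.origin := rfl

lemma boxSum_vals (a b : CPerm) :
    (boxSum a b).vals =
      (b.vals.take b.origin).map (shiftF b.originVal a.vals.length) ++
        a.vals.map (· + b.originVal) ++
        (b.vals.drop (b.origin + 1)).map (shiftF b.originVal a.vals.length) := rfl

lemma boxSum_vals_length {a b : CPerm} (hb : b.origin < b.vals.length) :
    (boxSum a b).vals.length + 1 = b.vals.length + a.vals.length := by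
  rw [boxSum_vals]
  simp only [List.length_append, List.length_map, List.length_take, List.length_drop]
  omega

lemma len_boxSum {a b : CPerm} (hb : b.origin < b.vals.length) (ha : 0 < a.vals.length) :
    (boxSum a b).len = a.len + b.len := by
  have := boxSum_vals_length (a := a) hb
  unfold len; omega

lemma boxSum_valAt_left {a b : CPerm} {j : ℕ} (hj : j < b.origin) (hb : b.origin < b.vals.length) :
    (boxSum a b).valAt j = shiftF b.originVal a.vals.length (b.valAt j) := by
  unfold valAt
  rw [boxSum_vals]
  rw [List.getD_append _ _ _ _ (by
    simp only [List.length_append, List.length_map, List.length_take]; omega)]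
  rw [List.getD_append _ _ _ _ (by simp only [List.length_map, List.length_take]; omega)]
  have hjb : j < b.vals.length := lt_trans hj hb
  have h1 : j < ((b.vals.take b.origin).map (shiftF b.originVal a.vals.length)).length := by
    simp only [List.length_map, List.length_take]; omega
  rw [List.getD_eq_getElem _ _ h1, List.getElem_map, List.getElem_take,
    List.getD_eq_getElem _ _ hjb]

lemma boxSum_valAt_mid {a b : CPerm} {i : ℕ} (hi : i < a.vals.length)
    (hb : b.origin < b.vals.length) :
    (boxSum a b).valAt (b.origin + i) = a.valAt i + b.originVal := by
  unfold valAt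
  rw [boxSum_vals]
  rw [List.getD_append _ _ _ _ (by
    simp only [List.length_append, List.length_map, List.length_take]; omega)]
  rw [List.getD_append_right _ _ _ _ (by simp only [List.length_map, List.length_take]; omega)]
  have hlen : ((b.vals.take b.origin).map (shiftF b.originVal a.vals.length)).length = b.origin := by
    simp only [List.length_map, List.length_take]; omega
  rw [hlen]
  have h2 : b.origin + i - b.origin = i := by omega
  rw [h2]
  have h3 : i < (a.vals.map (· + b.originVal)).length := by simpa using hi
  rw [List.getD_eq_getElem _ _ h3, List.getElem_map, List.getD_eq_getElem _ _ hi]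

lemma boxSum_valAt_right {a b : CPerm} {k : ℕ} (hk : b.origin + 1 + k < b.vals.length) :
    (boxSum a b).valAt (b.origin + a.vals.length + k) =
      shiftF b.originVal a.vals.length (b.valAt (b.origin + 1 + k)) := by
  unfold valAt
  rw [boxSum_vals]
  rw [List.getD_append_right _ _ _ _ (by
    simp only [List.length_append, List.length_map, List.length_take]; omega)]
  have hlen : ((b.vals.take b.origin).map (shiftF b.originVal a.vals.length) ++
      a.vals.map (· + b.originVal)).length = b.origin + a.vals.length := by
    simp only [List.length_append, List.length_map, List.length_take]; omega
  rw [hlen]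
  have h2 : b.origin + a.vals.length + k - (b.origin + a.vals.length) = k := by omega
  rw [h2]
  have h3 : k < ((b.vals.drop (b.origin + 1)).map (shiftF b.originVal a.vals.length)).length := by
    simp only [List.length_map, List.length_drop]; omega
  rw [List.getD_eq_getElem _ _ h3, List.getElem_map, List.getElem_drop]
  rw [List.getD_eq_getElem _ _ (by omega)]

end CPerm

namespace CPerm

lemma isValid_of (p : CPerm) (h0 : 0 < p.vals.length) (ho : p.origin < p.vals.length)
    (hb : ∀ i, i < p.vals.length → p.valAt i < p.vals.length)
    (hinj : ∀ i j, i < p.vals.length → j < p.vals.length → p.valAt i = p.valAt j → i = j) :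
    p.IsValid := by
  refine ⟨by intro h; rw [h] at h0; simp at h0, ho, perm_range ?_ ?_⟩
  · rw [List.nodup_iff_injective_getElem]
    intro i j hij
    have := hinj i.1 j.1 i.2 j.2 (by
      rw [valAt_eq_getElem i.2, valAt_eq_getElem j.2]; exact hij)
    exact Fin.ext this
  · intro x hx
    obtain ⟨i, hi, hieq⟩ := List.getElem_of_mem hx
    have := hb i hi
    rwa [valAt_eq_getElem hi, hieq] at this

lemma trivial_isValid : trivial.IsValid := by
  refine ⟨by simp [trivial], by simp [trivial], by simp [trivial, List.range_succ]⟩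

@[simp] lemma trivial_len : trivial.len = 0 := rfl

lemma boxSum_trivial (p : CPerm) : boxSum p trivial = p := by
  cases p with | mk v o =>
  simp [boxSum, trivial, originVal, valAt]

section Dec

variable {a b : CPerm}

lemma valAt_ne_originVal {b : CPerm} (hb : b.IsValid) {j : ℕ} (hj : j < b.vals.length)
    (hjo : j ≠ b.origin) : b.valAt j ≠ b.originVal := by
  intro h
  exact hjo (hb.valAt_inj hj hb.origin_lt h)

lemma boxSum_valAt_out (ha : a.IsValid) (hb : b.IsValid) {j : ℕ}
    (hj : j < (boxSum a b).vals.length) (hout : j < b.origin ∨ b.origin + a.vals.length ≤ j) :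
    (boxSum a b).valAt j < b.originVal ∨
      b.originVal + a.vals.length ≤ (boxSum a b).valAt j := by
  have hN := boxSum_vals_length (a := a) hb.origin_lt
  rcases hout with h | h
  · rw [boxSum_valAt_left h hb.origin_lt]
    exact shiftF_lt_or_ge ha.length_pos
      (valAt_ne_originVal hb (lt_trans h hb.origin_lt) (by omega))
  · set k := j - (b.origin + a.vals.length) with hk
    have hj' : j = b.origin + a.vals.length + k := by omega
    have hkb : b.origin + 1 + k < b.vals.length := by omega
    rw [hj', boxSum_valAt_right hkb]
    exact shiftF_lt_or_ge ha.length_pos (valAt_ne_originVal hb hkb (by omega))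

lemma boxSum_valAt_in (ha : a.IsValid) (hb : b.IsValid) {i : ℕ} (hi : i < a.vals.length) :
    b.originVal ≤ (boxSum a b).valAt (b.origin + i) ∧
      (boxSum a b).valAt (b.origin + i) < b.originVal + a.vals.length := by
  rw [boxSum_valAt_mid hi hb.origin_lt]
  have := ha.valAt_lt hi
  omega

lemma boxSum_isValid (ha : a.IsValid) (hb : b.IsValid) : (boxSum a b).IsValid := by
  have hN := boxSum_vals_length (a := a) hb.origin_lt
  have hbo := hb.origin_lt
  have hao := ha.origin_lt
  have hvb := hb.originVal_lt
  have hm1 : 1 ≤ a.vals.length := ha.length_pos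
  have key : ∀ x, x < (boxSum a b).vals.length →
      (x < b.origin ∨ b.origin + a.vals.length ≤ x) → ∃ jx, jx < b.vals.length ∧ jx ≠ b.origin ∧
        (boxSum a b).valAt x = shiftF b.originVal a.vals.length (b.valAt jx) ∧
        ((x < b.origin ∧ jx = x) ∨ (b.origin + a.vals.length ≤ x ∧ jx = x - a.vals.length + 1)) := by
    intro x hx hxout
    rcases hxout with h | h
    · exact ⟨x, lt_trans h hbo, by omega, boxSum_valAt_left h hbo, Or.inl ⟨h, rfl⟩⟩
    · set k := x - (b.origin + a.vals.length) with hk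
      have hx' : x = b.origin + a.vals.length + k := by omega
      have hkb : b.origin + 1 + k < b.vals.length := by omega
      refine ⟨b.origin + 1 + k, hkb, by omega, ?_, Or.inr ⟨h, by omega⟩⟩
      rw [hx']; exact boxSum_valAt_right hkb
  have hmid : ∀ x, x < (boxSum a b).vals.length → b.origin ≤ x → x < b.origin + a.vals.length →
      (boxSum a b).valAt x = a.valAt (x - b.origin) + b.originVal ∧
        b.originVal ≤ (boxSum a b).valAt x ∧
        (boxSum a b).valAt x < b.originVal + a.vals.length := by
    intro x hx h1 h2
    set i0 := x - b.origin with hi0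
    have hx' : x = b.origin + i0 := by omega
    refine ⟨?_, ?_⟩
    · rw [hx']; exact boxSum_valAt_mid (by omega) hbo
    · rw [hx']; exact boxSum_valAt_in ha hb (by omega)
  have hval : ∀ j, j < (boxSum a b).vals.length → (boxSum a b).valAt j < (boxSum a b).vals.length := by
    intro j hj
    by_cases hin : b.origin ≤ j ∧ j < b.origin + a.vals.length
    · obtain ⟨_, _, h3⟩ := hmid j hj hin.1 hin.2
      omega
    · obtain ⟨jx, hjx, hjxs, e, _⟩ := key j hj (by omega)
      rw [e]
      have := hb.valAt_lt hjx
      unfold shiftF; split_ifs <;> omega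
  refine isValid_of _ (by omega) (by rw [boxSum_origin]; omega) hval ?_
  intro i j hi hj hij
  by_cases hiin : b.origin ≤ i ∧ i < b.origin + a.vals.length <;>
    by_cases hjin : b.origin ≤ j ∧ j < b.origin + a.vals.length
  · obtain ⟨e1, _, _⟩ := hmid i hi hiin.1 hiin.2
    obtain ⟨e2, _, _⟩ := hmid j hj hjin.1 hjin.2
    rw [e1, e2] at hij
    have := ha.valAt_inj (i := i - b.origin) (j := j - b.origin) (by omega) (by omega) (by omega)
    omega
  · obtain ⟨e1, l1, u1⟩ := hmid i hi hiin.1 hiin.2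
    obtain ⟨jx, hjx, hjxs, e2, _⟩ := key j hj (by omega)
    rw [e1, e2] at hij
    have := shiftF_lt_or_ge (v := b.originVal) (m := a.vals.length) hm1
      (valAt_ne_originVal hb hjx hjxs)
    omega
  · obtain ⟨e1, l1, u1⟩ := hmid j hj hjin.1 hjin.2
    obtain ⟨jx, hjx, hjxs, e2, _⟩ := key i hi (by omega)
    rw [e1, e2] at hij
    have := shiftF_lt_or_ge (v := b.originVal) (m := a.vals.length) hm1
      (valAt_ne_originVal hb hjx hjxs)
    omega
  · obtain ⟨jx, hjx, hjxs, e1, p1⟩ := key i hi (by omega)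
    obtain ⟨jy, hjy, hjys, e2, p2⟩ := key j hj (by omega)
    rw [e1, e2] at hij
    have := hb.valAt_inj hjx hjy (shiftF_inj hij)
    omega

end Dec

end CPerm

namespace CPerm

def unshiftF (v m u : ℕ) : ℕ := if u < v then u else u - (m - 1)

lemma unshiftF_shiftF {v m : ℕ} (hm : 1 ≤ m) (u : ℕ) :
    unshiftF v m (shiftF v m u) = u := by
  unfold unshiftF shiftF; split_ifs <;> omega

lemma shiftF_unshiftF {v m u : ℕ} (hm : 1 ≤ m) (h : u < v ∨ v + m ≤ u) :
    shiftF v m (unshiftF v m u) = u := by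
  unfold unshiftF shiftF; split_ifs <;> omega

def restrict (p : CPerm) (s m v : ℕ) : CPerm :=
  ⟨((p.vals.drop s).take m).map (· - v), p.origin - s⟩

def contract (p : CPerm) (s m v : ℕ) : CPerm :=
  ⟨(p.vals.take s).map (unshiftF v m) ++ [v] ++ (p.vals.drop (s + m)).map (unshiftF v m), s⟩

@[simp] lemma restrict_origin (p : CPerm) (s m v : ℕ) :
    (restrict p s m v).origin = p.origin - s := rfl

@[simp] lemma contract_origin (p : CPerm) (s m v : ℕ) :
    (contract p s m v).origin = s := rfl

lemma restrict_length {p : CPerm} {s m : ℕ} (v : ℕ) (h : s + m ≤ p.vals.length) :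
    (restrict p s m v).vals.length = m := by
  simp only [restrict, List.length_map, List.length_take, List.length_drop]
  omega

lemma restrict_valAt {p : CPerm} {s m i : ℕ} (v : ℕ) (h : s + m ≤ p.vals.length)
    (hi : i < m) : (restrict p s m v).valAt i = p.valAt (s + i) - v := by
  unfold restrict valAt
  simp only
  have h1 : i < (((p.vals.drop s).take m).map (· - v)).length := by
    simp only [List.length_map, List.length_take, List.length_drop]; omega
  rw [List.getD_eq_getElem _ _ h1, List.getElem_map, List.getElem_take, List.getElem_drop,
    List.getD_eq_getElem _ _ (by omega)]

lemma contract_length {p : CPerm} {s m : ℕ} (v : ℕ) (h : s + m ≤ p.vals.length) :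
    (contract p s m v).vals.length = s + 1 + (p.vals.length - (s + m)) := by
  simp only [contract, List.length_append, List.length_map, List.length_take,
    List.length_drop, List.length_singleton]
  omega

lemma contract_valAt_left {p : CPerm} {s m j : ℕ} (v : ℕ) (h : s + m ≤ p.vals.length)
    (hj : j < s) : (contract p s m v).valAt j = unshiftF v m (p.valAt j) := by
  unfold contract valAt
  simp only
  rw [List.getD_append _ _ _ _ (by
    simp only [List.length_append, List.length_map, List.length_take, List.length_singleton]
    omega)]
  rw [List.getD_append _ _ _ _ (by
    simp only [List.length_map, List.length_take]; omega)]
  have h1 : j < ((p.vals.take s).map (unshiftF v m)).length := by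
    simp only [List.length_map, List.length_take]; omega
  rw [List.getD_eq_getElem _ _ h1, List.getElem_map, List.getElem_take,
    List.getD_eq_getElem _ _ (by omega)]

lemma contract_valAt_origin {p : CPerm} {s m : ℕ} (v : ℕ) (h : s + m ≤ p.vals.length)
    (hm : 1 ≤ m) : (contract p s m v).valAt s = v := by
  unfold contract valAt
  simp only
  rw [List.getD_append _ _ _ _ (by
    simp only [List.length_append, List.length_map, List.length_take, List.length_singleton]
    omega)]
  rw [List.getD_append_right _ _ _ _ (by
    simp only [List.length_map, List.length_take]; omega)]
  have h1 : ((p.vals.take s).map (unshiftF v m)).length = s := by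
    simp only [List.length_map, List.length_take]; omega
  rw [h1]
  simp

lemma contract_originVal {p : CPerm} {s m : ℕ} (v : ℕ) (h : s + m ≤ p.vals.length)
    (hm : 1 ≤ m) : (contract p s m v).originVal = v :=
  contract_valAt_origin v h hm

lemma contract_valAt_right {p : CPerm} {s m k : ℕ} (v : ℕ) (hk : s + m + k < p.vals.length) :
    (contract p s m v).valAt (s + 1 + k) = unshiftF v m (p.valAt (s + m + k)) := by
  unfold contract valAt
  simp only
  rw [List.getD_append_right _ _ _ _ (by
    simp only [List.length_append, List.length_map, List.length_take, List.length_singleton]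
    omega)]
  have h1 : ((p.vals.take s).map (unshiftF v m) ++ [v]).length = s + 1 := by
    simp only [List.length_append, List.length_map, List.length_take, List.length_singleton]
    omega
  rw [h1]
  have h2 : s + 1 + k - (s + 1) = k := by omega
  rw [h2]
  have h3 : k < ((p.vals.drop (s + m)).map (unshiftF v m)).length := by
    simp only [List.length_map, List.length_drop]; omega
  rw [List.getD_eq_getElem _ _ h3, List.getElem_map, List.getElem_drop,
    List.getD_eq_getElem _ _ (by omega)]

section Window

variable {p : CPerm} {s m v : ℕ}

lemma window_covers (hp : p.IsValid) (hs3 : s + m ≤ p.vals.length)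
    (hw : ∀ i, i < m → v ≤ p.valAt (s + i) ∧ p.valAt (s + i) < v + m) :
    ∀ u, v ≤ u → u < v + m → ∃ i, i < m ∧ p.valAt (s + i) = u := by
  intro u hu1 hu2
  have hsub : (Finset.range m).image (fun i => p.valAt (s + i)) ⊆ Finset.Ico v (v + m) := by
    intro x hx
    simp only [Finset.mem_image, Finset.mem_range] at hx
    obtain ⟨i, hi, rfl⟩ := hx
    simpa [Finset.mem_Ico] using hw i hi
  have hinj : Set.InjOn (fun i => p.valAt (s + i)) (Finset.range m) := by
    intro x hx y hy hxy
    simp only [Finset.coe_range, Set.mem_Iio] at hx hy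
    have := hp.valAt_inj (i := s + x) (j := s + y) (by omega) (by omega) hxy
    omega
  have hcard : ((Finset.range m).image (fun i => p.valAt (s + i))).card = m := by
    rw [Finset.card_image_of_injOn hinj, Finset.card_range]
  have heq : (Finset.range m).image (fun i => p.valAt (s + i)) = Finset.Ico v (v + m) :=
    Finset.eq_of_subset_of_card_le hsub (by simp [hcard])
  have : u ∈ Finset.Ico v (v + m) := Finset.mem_Ico.mpr ⟨hu1, hu2⟩
  rw [← heq] at this
  simp only [Finset.mem_image, Finset.mem_range] at this
  obtain ⟨i, hi, he⟩ := this
  exact ⟨i, hi, he⟩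

lemma window_out (hp : p.IsValid) (hs3 : s + m ≤ p.vals.length)
    (hw : ∀ i, i < m → v ≤ p.valAt (s + i) ∧ p.valAt (s + i) < v + m)
    {j : ℕ} (hj : j < p.vals.length) (hout : j < s ∨ s + m ≤ j) :
    p.valAt j < v ∨ v + m ≤ p.valAt j := by
  by_contra hcon
  push_neg at hcon
  obtain ⟨i, hi, he⟩ := window_covers hp hs3 hw (p.valAt j) (by omega) (by omega)
  have := hp.valAt_inj (by omega : s + i < p.vals.length) hj he
  omega

lemma window_val_bound (hp : p.IsValid) (hm : 1 ≤ m) (hs3 : s + m ≤ p.vals.length)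
    (hw : ∀ i, i < m → v ≤ p.valAt (s + i) ∧ p.valAt (s + i) < v + m) :
    v + m ≤ p.vals.length := by
  obtain ⟨i, hi, he⟩ := window_covers hp hs3 hw (v + m - 1) (by omega) (by omega)
  have := hp.valAt_lt (by omega : s + i < p.vals.length)
  omega

variable (hp : p.IsValid) (hm : 1 ≤ m) (hs1 : s ≤ p.origin) (hs2 : p.origin < s + m)
  (hs3 : s + m ≤ p.vals.length)
  (hw : ∀ i, i < m → v ≤ p.valAt (s + i) ∧ p.valAt (s + i) < v + m)

include hp hm hs1 hs2 hs3 hw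

lemma restrict_isValid : (restrict p s m v).IsValid := by
  have hL := restrict_length (p := p) v hs3
  refine isValid_of _ (by omega) (by simp only [restrict_origin]; omega) ?_ ?_
  · intro i hi
    rw [hL] at hi
    rw [restrict_valAt v hs3 hi, hL]
    have := (hw i hi).2
    omega
  · intro i j hi hj hij
    rw [hL] at hi hj
    rw [restrict_valAt v hs3 hi, restrict_valAt v hs3 hj] at hij
    have h1 := (hw i hi).1
    have h2 := (hw j hj).1
    have := hp.valAt_inj (i := s + i) (j := s + j) (by omega) (by omega) (by omega)
    omega

lemma contract_isValid : (contract p s m v).IsValid := by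
  have hL := contract_length (p := p) v hs3
  have hvm := window_val_bound hp hm hs3 hw
  have hout := fun {j} hj h2 => window_out hp hs3 hw (j := j) hj h2
  have hvals : ∀ j, j < (contract p s m v).vals.length →
      ((j < s ∧ (contract p s m v).valAt j = unshiftF v m (p.valAt j) ∧
          (p.valAt j < v ∨ v + m ≤ p.valAt j)) ∨
        (j = s ∧ (contract p s m v).valAt j = v) ∨
        (s < j ∧ (contract p s m v).valAt j = unshiftF v m (p.valAt (j + m - 1)) ∧
          (p.valAt (j + m - 1) < v ∨ v + m ≤ p.valAt (j + m - 1)) ∧ j + m - 1 < p.vals.length)) := by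
    intro j hj
    rw [hL] at hj
    rcases lt_trichotomy j s with h | h | h
    · exact Or.inl ⟨h, contract_valAt_left v hs3 h, hout (by omega) (by omega)⟩
    · exact Or.inr (Or.inl ⟨h, by rw [h]; exact contract_valAt_origin v hs3 hm⟩)
    · refine Or.inr (Or.inr ⟨h, ?_, hout (by omega) (by omega), by omega⟩)
      obtain ⟨k, rfl⟩ : ∃ k, j = s + 1 + k := ⟨j - s - 1, by omega⟩
      have h2 : s + 1 + k + m - 1 = s + m + k := by omega
      rw [h2, contract_valAt_right v (by omega)]
  refine isValid_of _ (by omega) (by simp only [contract_origin]; omega) ?_ ?_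
  · intro j hj
    rcases hvals j hj with ⟨h1, h2, h3⟩ | ⟨h1, h2⟩ | ⟨h1, h2, h3, h4⟩
    · have := hp.valAt_lt (by omega : j < p.vals.length)
      rw [hL, h2]; unfold unshiftF; split_ifs <;> omega
    · rw [hL, h2]; omega
    · have := hp.valAt_lt h4
      rw [hL, h2]; unfold unshiftF; split_ifs <;> omega
  · intro i j hi hj hij
    have unshift_inj : ∀ u1 u2, (u1 < v ∨ v + m ≤ u1) → (u2 < v ∨ v + m ≤ u2) →
        unshiftF v m u1 = unshiftF v m u2 → u1 = u2 := by
      intro u1 u2 h1 h2 h3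
      unfold unshiftF at h3; split_ifs at h3 <;> omega
    have unshift_ne_v : ∀ u, (u < v ∨ v + m ≤ u) → unshiftF v m u ≠ v := by
      intro u h1
      unfold unshiftF; split_ifs <;> omega
    rcases hvals i hi with ⟨a1, a2, a3⟩ | ⟨a1, a2⟩ | ⟨a1, a2, a3, a4⟩ <;>
      rcases hvals j hj with ⟨b1, b2, b3⟩ | ⟨b1, b2⟩ | ⟨b1, b2, b3, b4⟩ <;>
      rw [a2, b2] at hij
    · exact hp.valAt_inj (by omega) (by omega) (unshift_inj _ _ a3 b3 hij)
    · exact absurd hij (unshift_ne_v _ a3)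
    · have := hp.valAt_inj (i := i) (j := j + m - 1) (by omega) b4 (unshift_inj _ _ a3 b3 hij)
      omega
    · exact absurd hij.symm (unshift_ne_v _ b3)
    · omega
    · exact absurd hij.symm (unshift_ne_v _ b3)
    · have := hp.valAt_inj (i := i + m - 1) (j := j) a4 (by omega) (unshift_inj _ _ a3 b3 hij)
      omega
    · exact absurd hij (unshift_ne_v _ a3)
    · have := hp.valAt_inj a4 b4 (unshift_inj _ _ a3 b3 hij)
      omega

lemma boxSum_restrict_contract : boxSum (restrict p s m v) (contract p s m v) = p := by
  have hL := contract_length (p := p) v hs3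
  have hRL := restrict_length (p := p) v hs3
  have hvm := window_val_bound hp hm hs3 hw
  have hco : (contract p s m v).origin = s := rfl
  have hcov : (contract p s m v).originVal = v := contract_originVal v hs3 hm
  have hN : (boxSum (restrict p s m v) (contract p s m v)).vals.length + 1 =
      (contract p s m v).vals.length + (restrict p s m v).vals.length :=
    boxSum_vals_length (by rw [hco, hL]; omega)
  refine cperm_ext (by omega) ?_ ?_
  · intro j hj
    have hjN : j < p.vals.length := by omega
    rcases lt_trichotomy j s with h | h | h
    · have heq := boxSum_valAt_left (a := restrict p s m v) (b := contract p s m v)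
        (j := j) (by rw [hco]; omega) (by rw [hco, hL]; omega)
      rw [heq, hcov, hRL, contract_valAt_left v hs3 h,
        shiftF_unshiftF hm (window_out hp hs3 hw hjN (by omega))]
    · have heq := boxSum_valAt_mid (a := restrict p s m v) (b := contract p s m v)
        (i := j - s) (by rw [hRL]; omega) (by rw [hco, hL]; omega)
      rw [hco, hcov] at heq
      have hj' : s + (j - s) = j := by omega
      rw [hj'] at heq
      rw [heq, restrict_valAt v hs3 (by omega), hj']
      have := (hw (j - s) (by omega)).1
      rw [hj'] at this
      omega
    · by_cases h2 : j < s + m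
      · have heq := boxSum_valAt_mid (a := restrict p s m v) (b := contract p s m v)
          (i := j - s) (by rw [hRL]; omega) (by rw [hco, hL]; omega)
        rw [hco, hcov] at heq
        have hj' : s + (j - s) = j := by omega
        rw [hj'] at heq
        rw [heq, restrict_valAt v hs3 (by omega), hj']
        have := (hw (j - s) (by omega)).1
        rw [hj'] at this
        omega
      · have heq := boxSum_valAt_right (a := restrict p s m v) (b := contract p s m v)
          (k := j - (s + m)) (by rw [hco, hL]; omega)
        rw [hco, hcov, hRL] at heq
        have hj' : s + m + (j - (s + m)) = j := by omega
        rw [hj'] at heq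
        have hj'' : s + 1 + (j - (s + m)) = j - m + 1 := by omega
        rw [heq, contract_valAt_right v (by omega), hj',
          shiftF_unshiftF hm (window_out hp hs3 hw hjN (by omega))]
  · rw [boxSum_origin, hco, restrict_origin]
    omega

end Window

end CPerm

namespace CPerm

section Reconstruct

variable {a b : CPerm}

lemma dec_s_m_le (ha : a.IsValid) (hb : b.IsValid) :
    b.origin + a.vals.length ≤ (boxSum a b).vals.length := by
  have := boxSum_vals_length (a := a) hb.origin_lt
  have := hb.origin_lt
  omega

lemma dec_restrict (ha : a.IsValid) (hb : b.IsValid) :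
    restrict (boxSum a b) b.origin a.vals.length b.originVal = a := by
  have hsm := dec_s_m_le ha hb
  refine cperm_ext ?_ ?_ ?_
  · rw [restrict_length _ hsm]
  · intro i hi
    rw [restrict_length _ hsm] at hi
    rw [restrict_valAt _ hsm hi, boxSum_valAt_mid hi hb.origin_lt]
    omega
  · rw [restrict_origin, boxSum_origin]
    omega

lemma dec_contract (ha : a.IsValid) (hb : b.IsValid) :
    contract (boxSum a b) b.origin a.vals.length b.originVal = b := by
  have hsm := dec_s_m_le ha hb
  have hN := boxSum_vals_length (a := a) hb.origin_lt
  have hm1 : 1 ≤ a.vals.length := ha.length_pos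
  have hbo := hb.origin_lt
  refine cperm_ext ?_ ?_ ?_
  · rw [contract_length _ hsm]; omega
  · intro j hj
    rw [contract_length _ hsm] at hj
    rcases lt_trichotomy j b.origin with h | h | h
    · rw [contract_valAt_left _ hsm h, boxSum_valAt_left h hbo, unshiftF_shiftF hm1]
    · rw [h, contract_valAt_origin _ hsm hm1]; rfl
    · obtain ⟨k, rfl⟩ : ∃ k, j = b.origin + 1 + k := ⟨j - b.origin - 1, by omega⟩
      have hk : b.origin + 1 + k < b.vals.length := by omega
      rw [contract_valAt_right _ (by omega), boxSum_valAt_right hk, unshiftF_shiftF hm1]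
  · rfl

lemma dec_v_attained (ha : a.IsValid) (hb : b.IsValid) :
    ∃ i, i < a.vals.length ∧ (boxSum a b).valAt (b.origin + i) = b.originVal := by
  obtain ⟨i, hi, he⟩ := ha.exists_valAt (w := 0) ha.length_pos
  exact ⟨i, hi, by rw [boxSum_valAt_mid hi hb.origin_lt, he]; omega⟩

lemma dec_unique {a' b' : CPerm} (ha : a.IsValid) (hb : b.IsValid)
    (ha' : a'.IsValid) (hb' : b'.IsValid) (heq : boxSum a b = boxSum a' b')
    (hs : b.origin = b'.origin) (hm : a.vals.length = a'.vals.length) :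
    a = a' ∧ b = b' := by
  have hv : b.originVal = b'.originVal := by
    obtain ⟨i, hi, he⟩ := dec_v_attained ha hb
    obtain ⟨i', hi', he'⟩ := dec_v_attained ha' hb'
    rw [heq] at he
    have h1 := (boxSum_valAt_in ha' hb' (i := i) (by omega)).1
    rw [← hs] at h1
    have h2 := (boxSum_valAt_in ha hb (i := i') (by omega)).1
    rw [hs, heq] at h2
    omega
  constructor
  · rw [← dec_restrict ha hb, ← dec_restrict ha' hb', heq, hs, hm, hv]
  · rw [← dec_contract ha hb, ← dec_contract ha' hb', heq, hs, hm, hv]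

lemma boxSum_left_cancel {c : CPerm} (ha : a.IsValid) (hb : b.IsValid) (hc : c.IsValid)
    (heq : boxSum a b = boxSum a c) : b = c := by
  have hs : b.origin = c.origin := by
    have := congrArg origin heq
    rw [boxSum_origin, boxSum_origin] at this
    omega
  exact (dec_unique ha hb ha hc heq hs rfl).2

end Reconstruct

section Quadrant

variable {a : CPerm}

lemma oneQuadrant_1_iff (ha : a.IsValid) (hl : 1 ≤ a.len) :
    a.OneQuadrant 1 ↔ a.origin = 0 ∧ a.originVal = 0 := by
  have hN := ha.length_pos
  have hlen : 2 ≤ a.vals.length := by unfold len at hl; omega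
  constructor
  · intro h
    have ho : a.origin = 0 := by
      by_contra hne
      obtain ⟨_, hne', hq⟩ := h 0 (by omega) (fun he => hne he.symm)
      rcases hq with ⟨_, h2, _⟩ | ⟨h1, _⟩ | ⟨h1, _⟩ | ⟨h1, _⟩ <;> omega
    refine ⟨ho, ?_⟩
    obtain ⟨i0, hi0, he0⟩ := ha.exists_valAt (w := 0) (by omega)
    by_cases hio : i0 = a.origin
    · unfold originVal; rw [← hio, he0]
    · obtain ⟨_, _, hq⟩ := h i0 hi0 hio
      rcases hq with ⟨_, _, h3⟩ | ⟨h1, _⟩ | ⟨h1, _⟩ | ⟨h1, _, h3⟩ <;> omega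
  · rintro ⟨h1, h2⟩ i hi hio
    refine ⟨hi, hio, Or.inl ⟨rfl, by omega, ?_⟩⟩
    have := valAt_ne_originVal ha hi hio
    omega

lemma oneQuadrant_2_iff (ha : a.IsValid) (hl : 1 ≤ a.len) :
    a.OneQuadrant 2 ↔ a.origin = a.vals.length - 1 ∧ a.originVal = 0 := by
  have hN := ha.length_pos
  have hlen : 2 ≤ a.vals.length := by unfold len at hl; omega
  have hor := ha.origin_lt
  constructor
  · intro h
    have ho : a.origin = a.vals.length - 1 := by
      by_contra hne
      obtain ⟨_, hne', hq⟩ := h (a.vals.length - 1) (by omega) (fun he => hne he.symm)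
      rcases hq with ⟨h1, _⟩ | ⟨_, h2, _⟩ | ⟨_, h2, _⟩ | ⟨h1, _⟩ <;> omega
    refine ⟨ho, ?_⟩
    obtain ⟨i0, hi0, he0⟩ := ha.exists_valAt (w := 0) (by omega)
    by_cases hio : i0 = a.origin
    · unfold originVal; rw [← hio, he0]
    · obtain ⟨_, _, hq⟩ := h i0 hi0 hio
      rcases hq with ⟨h1, _⟩ | ⟨_, _, h3⟩ | ⟨_, _, h3⟩ | ⟨h1, _⟩ <;> omega
  · rintro ⟨h1, h2⟩ i hi hio
    refine ⟨hi, hio, Or.inr (Or.inl ⟨rfl, by omega, ?_⟩)⟩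
    have := valAt_ne_originVal ha hi hio
    omega

lemma oneQuadrant_3_iff (ha : a.IsValid) (hl : 1 ≤ a.len) :
    a.OneQuadrant 3 ↔ a.origin = a.vals.length - 1 ∧ a.originVal = a.vals.length - 1 := by
  have hN := ha.length_pos
  have hlen : 2 ≤ a.vals.length := by unfold len at hl; omega
  have hor := ha.origin_lt
  constructor
  · intro h
    have ho : a.origin = a.vals.length - 1 := by
      by_contra hne
      obtain ⟨_, hne', hq⟩ := h (a.vals.length - 1) (by omega) (fun he => hne he.symm)
      rcases hq with ⟨h1, _⟩ | ⟨_, h2, _⟩ | ⟨_, h2, _⟩ | ⟨h1, _⟩ <;> omega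
    refine ⟨ho, ?_⟩
    obtain ⟨i0, hi0, he0⟩ := ha.exists_valAt (w := a.vals.length - 1) (by omega)
    by_cases hio : i0 = a.origin
    · unfold originVal; rw [← hio, he0]
    · obtain ⟨_, _, hq⟩ := h i0 hi0 hio
      have := ha.originVal_lt
      rcases hq with ⟨h1, _⟩ | ⟨_, _, h3⟩ | ⟨_, _, h3⟩ | ⟨h1, _⟩ <;> omega
  · rintro ⟨h1, h2⟩ i hi hio
    refine ⟨hi, hio, Or.inr (Or.inr (Or.inl ⟨rfl, by omega, ?_⟩))⟩
    have := valAt_ne_originVal ha hi hio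
    have := ha.valAt_lt hi
    omega

lemma oneQuadrant_4_iff (ha : a.IsValid) (hl : 1 ≤ a.len) :
    a.OneQuadrant 4 ↔ a.origin = 0 ∧ a.originVal = a.vals.length - 1 := by
  have hN := ha.length_pos
  have hlen : 2 ≤ a.vals.length := by unfold len at hl; omega
  constructor
  · intro h
    have ho : a.origin = 0 := by
      by_contra hne
      obtain ⟨_, hne', hq⟩ := h 0 (by omega) (fun he => hne he.symm)
      rcases hq with ⟨_, h2, _⟩ | ⟨h1, _⟩ | ⟨h1, _⟩ | ⟨_, h2, _⟩ <;> omega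
    refine ⟨ho, ?_⟩
    obtain ⟨i0, hi0, he0⟩ := ha.exists_valAt (w := a.vals.length - 1) (by omega)
    by_cases hio : i0 = a.origin
    · unfold originVal; rw [← hio, he0]
    · obtain ⟨_, _, hq⟩ := h i0 hi0 hio
      have := ha.originVal_lt
      rcases hq with ⟨_, _, h3⟩ | ⟨h1, _⟩ | ⟨h1, _⟩ | ⟨_, _, h3⟩ <;> omega
  · rintro ⟨h1, h2⟩ i hi hio
    refine ⟨hi, hio, Or.inr (Or.inr (Or.inr ⟨rfl, by omega, ?_⟩))⟩
    have := valAt_ne_originVal ha hi hio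
    have := ha.valAt_lt hi
    omega

lemma oneQuadrant_ne {q q' : ℕ} (ha : a.IsValid) (hl : 1 ≤ a.len)
    (h1 : a.OneQuadrant q) (h2 : a.OneQuadrant q') (hqq : q ≠ q')
    (hq : q = 1 ∨ q = 2 ∨ q = 3 ∨ q = 4) (hq' : q' = 1 ∨ q' = 2 ∨ q' = 3 ∨ q' = 4) :
    False := by
  have hN := ha.length_pos
  have hlen : 2 ≤ a.vals.length := by unfold len at hl; omega
  have hi : ∃ i, i < a.vals.length ∧ i ≠ a.origin := by
    by_cases h : a.origin = 0
    · exact ⟨1, by omega, by omega⟩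
    · exact ⟨0, by omega, fun he => h he.symm⟩
  obtain ⟨i, hilt, hio⟩ := hi
  obtain ⟨_, _, hqa⟩ := h1 i hilt hio
  obtain ⟨_, _, hqb⟩ := h2 i hilt hio
  rcases hqa with ⟨e, r1, r2⟩ | ⟨e, r1, r2⟩ | ⟨e, r1, r2⟩ | ⟨e, r1, r2⟩ <;>
    rcases hqb with ⟨e', s1, s2⟩ | ⟨e', s1, s2⟩ | ⟨e', s1, s2⟩ | ⟨e', s1, s2⟩ <;>
    omega

end Quadrant

end CPerm

namespace CPerm

lemma IsValid.two_le_vals {a : CPerm} (ha : a.IsValid) (hl : 1 ≤ a.len) :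
    2 ≤ a.vals.length := by
  have := ha.length_pos; unfold len at hl; omega

lemma indec_window_size {a : CPerm} (ha : a.IsValid) (hai : a.BoxIndecomposable)
    {s0 c w0 : ℕ} (hc : 1 ≤ c) (h1 : s0 ≤ a.origin) (h2 : a.origin < s0 + c)
    (h3 : s0 + c ≤ a.vals.length)
    (hw : ∀ i, i < c → w0 ≤ a.valAt (s0 + i) ∧ a.valAt (s0 + i) < w0 + c) :
    c = 1 ∨ c = a.vals.length := by
  by_contra hcon
  push_neg at hcon
  have hx := restrict_isValid ha hc h1 h2 h3 hw
  have hy := contract_isValid ha hc h1 h2 h3 hw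
  have hxy := boxSum_restrict_contract ha hc h1 h2 h3 hw
  refine hai.2 ⟨_, _, hx, hy, ?_, ?_, hxy⟩
  · unfold len; rw [restrict_length _ h3]; omega
  · unfold len; rw [contract_length _ h3]; omega

lemma dec_window {p a b : CPerm} (ha : a.IsValid) (hb : b.IsValid) (hab : boxSum a b = p) :
    ∀ i, i < a.vals.length → b.originVal ≤ p.valAt (b.origin + i) ∧
      p.valAt (b.origin + i) < b.originVal + a.vals.length := by
  intro i hi
  rw [← hab]
  exact boxSum_valAt_in ha hb hi

lemma dec_mid {p a b : CPerm} (hb : b.IsValid) (hab : boxSum a b = p) :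
    ∀ i, i < a.vals.length → p.valAt (b.origin + i) = a.valAt i + b.originVal := by
  intro i hi
  rw [← hab]
  exact boxSum_valAt_mid hi hb.origin_lt

lemma dec_origin {p a b : CPerm} (hab : boxSum a b = p) :
    p.origin = b.origin + a.origin := by rw [← hab]; rfl

lemma dec_len {p a b : CPerm} (hb : b.IsValid) (hab : boxSum a b = p) :
    p.vals.length + 1 = b.vals.length + a.vals.length := by
  rw [← hab]; exact boxSum_vals_length hb.origin_lt

lemma windows_cross {p a b a' b' : CPerm} (hp : p.IsValid)
    (ha : a.IsValid) (hb : b.IsValid) (hai : a.BoxIndecomposable) (hab : boxSum a b = p)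
    (ha' : a'.IsValid) (hb' : b'.IsValid) (hai' : a'.BoxIndecomposable)
    (hab' : boxSum a' b' = p)
    (hne : ¬(b.origin = b'.origin ∧ a.vals.length = a'.vals.length)) :
    max b.origin b'.origin = p.origin ∧
    min (b.origin + a.vals.length) (b'.origin + a'.vals.length) = p.origin + 1 ∧
    max b.originVal b'.originVal = p.originVal ∧
    min (b.originVal + a.vals.length) (b'.originVal + a'.vals.length) = p.originVal + 1 := by
  have hm2 : 2 ≤ a.vals.length := ha.two_le_vals hai.1
  have hm2' : 2 ≤ a'.vals.length := ha'.two_le_vals hai'.1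
  have hao := ha.origin_lt
  have hao' := ha'.origin_lt
  have hN := dec_len hb hab
  have hN' := dec_len hb' hab'
  have hor := dec_origin hab
  have hor' := dec_origin hab'
  have hbo := hb.origin_lt
  have hbo' := hb'.origin_lt
  have hwin := dec_window ha hb hab
  have hwin' := dec_window ha' hb' hab'
  have hmid := dec_mid hb hab
  have hmid' := dec_mid hb' hab'
  set s := b.origin
  set s' := b'.origin
  set m := a.vals.length
  set m' := a'.vals.length
  set v := b.originVal
  set v' := b'.originVal
  set l := max s s' with hl
  set r := min (s + m) (s' + m') with hr
  set w := max v v' with hwdef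
  set x := min (v + m) (v' + m') with hx
  have hsm : s + m ≤ p.vals.length := by omega
  have hsm' : s' + m' ≤ p.vals.length := by omega
  have hlr : l ≤ p.origin ∧ p.origin < r := by omega
  -- values on the position intersection lie in the value intersection
  have hIval : ∀ i, i < r - l → w ≤ p.valAt (l + i) ∧ p.valAt (l + i) < x := by
    intro i hi
    have h1 := hwin (l + i - s) (by omega)
    have h2 := hwin' (l + i - s') (by omega)
    rw [show s + (l + i - s) = l + i by omega] at h1
    rw [show s' + (l + i - s') = l + i by omega] at h2
    omega
  -- r - l ≤ x - w
  have hcard1 : r - l ≤ x - w := by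
    have hsub : ∀ i ∈ Finset.range (r - l), p.valAt (l + i) ∈ Finset.Ico w x := by
      intro i hi
      rw [Finset.mem_range] at hi
      simpa [Finset.mem_Ico] using hIval i hi
    have hinj : Set.InjOn (fun i => p.valAt (l + i)) (Finset.range (r - l)) := by
      intro i hi j hj hij
      simp only [Finset.coe_range, Set.mem_Iio] at hi hj
      have := hp.valAt_inj (i := l + i) (j := l + j) (by omega) (by omega) hij
      omega
    have := Finset.card_le_card_of_injOn _ hsub hinj
    simpa using this
  -- x - w ≤ r - l
  have hcard2 : x - w ≤ r - l := by
    have hsub : Finset.Ico w x ⊆ (Finset.range (r - l)).image (fun i => p.valAt (l + i)) := by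
      intro u hu
      rw [Finset.mem_Ico] at hu
      obtain ⟨i, hi, hei⟩ := window_covers hp hsm hwin u (by omega) (by omega)
      obtain ⟨i', hi', hei'⟩ := window_covers hp hsm' hwin' u (by omega) (by omega)
      have heq : s + i = s' + i' := hp.valAt_inj (by omega) (by omega) (by rw [hei, hei'])
      have hpos : l ≤ s + i ∧ s + i < r := by omega
      rw [Finset.mem_image]
      exact ⟨s + i - l, by rw [Finset.mem_range]; omega,
        by rw [show l + (s + i - l) = s + i by omega]; exact hei⟩
    calc x - w = (Finset.Ico w x).card := by rw [Nat.card_Ico]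
    _ ≤ _ := Finset.card_le_card hsub
    _ ≤ (Finset.range (r - l)).card := Finset.card_image_le
    _ = r - l := by rw [Finset.card_range]
  have hc1 : 1 ≤ r - l := by omega
  have hceq : x - w = r - l := by omega
  -- transfer the intersection window into a
  have hsize : r - l = 1 ∨ r - l = m := by
    refine indec_window_size ha hai (s0 := l - s) (c := r - l) (w0 := w - v)
      hc1 (by omega) (by omega) (by omega) ?_
    intro i hi
    have h1 := hIval i hi
    have h2 := hmid (l - s + i) (by omega)
    rw [show s + (l - s + i) = l + i by omega] at h2
    omega
  have hsize' : r - l = 1 ∨ r - l = m' := by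
    refine indec_window_size ha' hai' (s0 := l - s') (c := r - l) (w0 := w - v')
      hc1 (by omega) (by omega) (by omega) ?_
    intro i hi
    have h1 := hIval i hi
    have h2 := hmid' (l - s' + i) (by omega)
    rw [show s' + (l - s' + i) = l + i by omega] at h2
    omega
  have hc_one : r - l = 1 := by
    rcases hsize with h | h
    · exact h
    · exfalso
      rcases hsize' with h' | h'
      · omega
      · omega
  -- conclude
  have hlo : l = p.origin ∧ r = p.origin + 1 := by omega
  have hv0 : w ≤ p.originVal ∧ p.originVal < x := by
    have := hIval 0 (by omega)
    rw [Nat.add_zero, hlo.1] at this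
    exact this
  unfold l r w x at *
  refine ⟨by omega, by omega, by omega, by omega⟩
end CPerm

namespace CPerm

lemma shiftF_comp1 {vb vc na nb : ℕ} (h1 : 1 ≤ na) (h2 : vb < nb) (u : ℕ) :
    shiftF (vb + vc) na (shiftF vc nb u) = shiftF vc (na + nb - 1) u := by
  unfold shiftF; split_ifs <;> omega

lemma shiftF_comp2 {vb vc na : ℕ} (u : ℕ) :
    shiftF (vb + vc) na (u + vc) = shiftF vb na u + vc := by
  unfold shiftF; split_ifs <;> omega

lemma boxSum_originVal {b c : CPerm} (hb : b.origin < b.vals.length)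
    (hc : c.origin < c.vals.length) :
    (boxSum b c).originVal = b.originVal + c.originVal := by
  unfold originVal
  rw [boxSum_origin]
  exact boxSum_valAt_mid hb hc

lemma boxSum_assoc {a b c : CPerm} (ha : 1 ≤ a.vals.length) (hb : b.IsValid)
    (hc : c.IsValid) :
    boxSum (boxSum a b) c = boxSum a (boxSum b c) := by
  have hbo := hb.origin_lt
  have hco := hc.origin_lt
  have hvb := hb.originVal_lt
  have hq : (boxSum b c).origin = c.origin + b.origin := boxSum_origin b c
  have hqv : (boxSum b c).originVal = b.originVal + c.originVal := boxSum_originVal hbo hco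
  have hqlen : (boxSum b c).vals.length + 1 = c.vals.length + b.vals.length :=
    boxSum_vals_length hco
  have hulen : (boxSum a b).vals.length + 1 = b.vals.length + a.vals.length :=
    boxSum_vals_length hbo
  have f1 : shiftF (b.originVal + c.originVal) a.vals.length ∘ shiftF c.originVal b.vals.length
      = shiftF c.originVal (a.vals.length + b.vals.length - 1) :=
    funext (fun u => shiftF_comp1 ha hvb u)
  have f2 : shiftF (b.originVal + c.originVal) a.vals.length ∘ (· + c.originVal)
      = (· + c.originVal) ∘ shiftF b.originVal a.vals.length :=
    funext (fun u => shiftF_comp2 u)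
  have f3 : ((· + c.originVal) ∘ (· + b.originVal) : ℕ → ℕ)
      = (· + (b.originVal + c.originVal)) := by
    funext u; simp; omega
  have hqo : (boxSum b c).origin < (boxSum b c).vals.length := by rw [hq]; omega
  have hM : (boxSum a b).vals.length = a.vals.length + b.vals.length - 1 := by omega
  have hLlen := boxSum_vals_length (a := boxSum a b) hco
  have hRlen := boxSum_vals_length (a := a) hqo
  refine cperm_ext (by omega) ?_ ?_
  · intro j hj
    have hjT : j < c.vals.length + b.vals.length + a.vals.length - 2 := by omega
    rcases Nat.lt_or_ge j c.origin with h1 | h1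
    · -- region 1
      rw [boxSum_valAt_left h1 hco, boxSum_valAt_left (by omega) hqo, hM,
        boxSum_valAt_left h1 hco, hqv]
      exact (shiftF_comp1 ha hvb _).symm
    · rcases Nat.lt_or_ge j (c.origin + b.origin) with h2 | h2
      · -- region 2a
        obtain ⟨i, rfl⟩ : ∃ i, j = c.origin + i := ⟨j - c.origin, by omega⟩
        have hui : i < (boxSum a b).vals.length := by omega
        rw [boxSum_valAt_mid hui hco, boxSum_valAt_left (a := a) (by omega) hqo,
          boxSum_valAt_left (a := a) (b := b) (by omega) hbo, hqv,
          boxSum_valAt_mid (a := b) (by omega) hco]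
        exact (shiftF_comp2 _).symm
      · rcases Nat.lt_or_ge j (c.origin + b.origin + a.vals.length) with h3 | h3
        · -- region 2b
          obtain ⟨i2, rfl⟩ : ∃ i2, j = c.origin + (b.origin + i2) :=
            ⟨j - c.origin - b.origin, by omega⟩
          have hui : b.origin + i2 < (boxSum a b).vals.length := by omega
          rw [boxSum_valAt_mid hui hco, boxSum_valAt_mid (a := a) (b := b) (by omega) hbo]
          have : c.origin + (b.origin + i2) = (boxSum b c).origin + i2 := by rw [hq]; omega
          rw [this, boxSum_valAt_mid (a := a) (by omega) hqo, hqv]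
          omega
        · rcases Nat.lt_or_ge j (c.origin + b.vals.length + a.vals.length - 1) with h4 | h4
          · -- region 2c
            obtain ⟨k, rfl⟩ : ∃ k, j = c.origin + (b.origin + a.vals.length + k) :=
              ⟨j - c.origin - b.origin - a.vals.length, by omega⟩
            have hui : b.origin + a.vals.length + k < (boxSum a b).vals.length := by omega
            rw [boxSum_valAt_mid hui hco, boxSum_valAt_right (a := a) (b := b) (by omega)]
            have : c.origin + (b.origin + a.vals.length + k) =
                (boxSum b c).origin + a.vals.length + k := by rw [hq]; omega
            rw [this, boxSum_valAt_right (a := a) (b := boxSum b c) (by rw [hq]; omega)]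
            have : (boxSum b c).valAt ((boxSum b c).origin + 1 + k) = b.valAt (b.origin + 1 + k) + c.originVal := by
              have e : (boxSum b c).origin + 1 + k = c.origin + (b.origin + 1 + k) := by rw [hq]; omega
              rw [e]; exact boxSum_valAt_mid (by omega) hco
            rw [this, hqv]
            exact (shiftF_comp2 _).symm
          · -- region 3
            obtain ⟨k, rfl⟩ : ∃ k, j = c.origin + (boxSum a b).vals.length + k :=
              ⟨j - c.origin - (boxSum a b).vals.length, by omega⟩
            rw [boxSum_valAt_right (a := boxSum a b) (b := c) (by omega)]
            have e2 : c.origin + (boxSum a b).vals.length + k =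
                (boxSum b c).origin + a.vals.length + (b.vals.length - 1 - b.origin + k) := by
              rw [hq]; omega
            rw [e2, boxSum_valAt_right (a := a) (b := boxSum b c) (by rw [hq]; omega)]
            have e3 : (boxSum b c).origin + 1 + (b.vals.length - 1 - b.origin + k) =
                c.origin + b.vals.length + k := by rw [hq]; omega
            rw [e3]
            have e4 : c.origin + b.vals.length + k = c.origin + b.vals.length + k := rfl
            have : (boxSum b c).valAt (c.origin + b.vals.length + k) =
                shiftF c.originVal b.vals.length (c.valAt (c.origin + 1 + k)) := by
              have e5 : c.origin + b.vals.length + k = c.origin + b.vals.length + k := rfl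
              exact boxSum_valAt_right (a := b) (b := c) (by omega)
            rw [this, hqv, hM]
            exact (shiftF_comp1 ha hvb _).symm
  · rw [boxSum_origin, boxSum_origin, boxSum_origin, hq]
    omega

end CPerm

namespace CPerm

lemma originVal_def (p : CPerm) : p.originVal = p.valAt p.origin := rfl

lemma boxSum_swap13 {a1 a3 : CPerm} (h1 : a1.IsValid) (h3 : a3.IsValid)
    (hl1 : 1 ≤ a1.len) (hl3 : 1 ≤ a3.len)
    (hq1 : a1.OneQuadrant 1) (hq3 : a3.OneQuadrant 3) :
    boxSum a1 a3 = boxSum a3 a1 := by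
  obtain ⟨ho1, hv1⟩ := (oneQuadrant_1_iff h1 hl1).mp hq1
  obtain ⟨ho3, hv3⟩ := (oneQuadrant_3_iff h3 hl3).mp hq3
  have hn1 := h1.two_le_vals hl1
  have hn3 := h3.two_le_vals hl3
  have ho1lt := h1.origin_lt
  have ho3lt := h3.origin_lt
  have hL := boxSum_vals_length (a := a1) ho3lt
  have hR := boxSum_vals_length (a := a3) ho1lt
  have hv1' : a1.valAt 0 = 0 := by
    have := hv1; rwa [originVal_def, ho1] at this
  have hv3' : a3.valAt (a3.vals.length - 1) = a3.vals.length - 1 := by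
    have := hv3; rwa [originVal_def, ho3] at this
  refine cperm_ext (by omega) ?_ ?_
  · intro j hj
    rcases Nat.lt_or_ge j (a3.vals.length - 1) with h | h
    · have hLe := boxSum_valAt_left (a := a1) (b := a3) (j := j) (by omega) ho3lt
      have hRe := boxSum_valAt_mid (a := a3) (b := a1) (i := j) (by omega) ho1lt
      rw [show a1.origin + j = j by omega] at hRe
      rw [hLe, hRe, hv1, hv3]
      have hlt := h3.valAt_lt (i := j) (by omega)
      have hne := valAt_ne_originVal h3 (j := j) (by omega) (by omega)
      rw [hv3] at hne
      unfold shiftF; split_ifs <;> omega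
    · obtain ⟨i, rfl⟩ : ∃ i, j = a3.origin + i := ⟨j - a3.origin, by omega⟩
      have hi : i < a1.vals.length := by omega
      have hLe := boxSum_valAt_mid (a := a1) (b := a3) (i := i) hi ho3lt
      rcases Nat.eq_zero_or_pos i with rfl | hipos
      · have hRe := boxSum_valAt_mid (a := a3) (b := a1) (i := a3.origin) (by omega) ho1lt
        rw [show a1.origin + a3.origin = a3.origin + 0 by omega] at hRe
        rw [hLe, hRe, hv1, hv3, hv1', ← originVal_def, hv3]
        omega
      · have hRe := boxSum_valAt_right (a := a3) (b := a1) (k := i - 1) (by omega)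
        rw [show a1.origin + a3.vals.length + (i - 1) = a3.origin + i by omega,
          show a1.origin + 1 + (i - 1) = i by omega] at hRe
        rw [hLe, hRe, hv1, hv3]
        unfold shiftF; split_ifs <;> omega
  · rw [boxSum_origin, boxSum_origin]
    omega

lemma boxSum_swap24 {a2 a4 : CPerm} (h2 : a2.IsValid) (h4 : a4.IsValid)
    (hl2 : 1 ≤ a2.len) (hl4 : 1 ≤ a4.len)
    (hq2 : a2.OneQuadrant 2) (hq4 : a4.OneQuadrant 4) :
    boxSum a2 a4 = boxSum a4 a2 := by
  obtain ⟨ho2, hv2⟩ := (oneQuadrant_2_iff h2 hl2).mp hq2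
  obtain ⟨ho4, hv4⟩ := (oneQuadrant_4_iff h4 hl4).mp hq4
  have hn2 := h2.two_le_vals hl2
  have hn4 := h4.two_le_vals hl4
  have ho2lt := h2.origin_lt
  have ho4lt := h4.origin_lt
  have hL := boxSum_vals_length (a := a2) ho4lt
  have hR := boxSum_vals_length (a := a4) ho2lt
  have hv2' : a2.valAt (a2.vals.length - 1) = 0 := by
    have := hv2; rwa [originVal_def, ho2] at this
  have hv4' : a4.valAt 0 = a4.vals.length - 1 := by
    have := hv4; rwa [originVal_def, ho4] at this
  refine cperm_ext (by omega) ?_ ?_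
  · intro j hj
    rcases Nat.lt_or_ge j (a2.vals.length - 1) with h | h
    · have hLe := boxSum_valAt_mid (a := a2) (b := a4) (i := j) (by omega) ho4lt
      rw [show a4.origin + j = j by omega] at hLe
      have hRe := boxSum_valAt_left (a := a4) (b := a2) (j := j) (by omega) ho2lt
      rw [hLe, hRe, hv2, hv4]
      have hlt := h2.valAt_lt (i := j) (by omega)
      have hne := valAt_ne_originVal h2 (j := j) (by omega) (by omega)
      rw [hv2] at hne
      unfold shiftF; split_ifs <;> omega
    · obtain ⟨i, rfl⟩ : ∃ i, j = a2.origin + i := ⟨j - a2.origin, by omega⟩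
      have hi : i < a4.vals.length := by omega
      have hRe := boxSum_valAt_mid (a := a4) (b := a2) (i := i) hi ho2lt
      rcases Nat.eq_zero_or_pos i with rfl | hipos
      · have hLe := boxSum_valAt_mid (a := a2) (b := a4) (i := a2.origin) (by omega) ho4lt
        rw [show a4.origin + a2.origin = a2.origin + 0 by omega] at hLe
        rw [hLe, hRe, hv2, hv4, hv4', ← originVal_def, hv2]
        omega
      · have hLe := boxSum_valAt_right (a := a2) (b := a4) (k := i - 1) (by omega)
        rw [show a4.origin + a2.vals.length + (i - 1) = a2.origin + i by omega,
          show a4.origin + 1 + (i - 1) = i by omega] at hLe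
        rw [hLe, hRe, hv2, hv4]
        have hlt := h4.valAt_lt (i := i) (by omega)
        have hne := valAt_ne_originVal h4 (j := i) (by omega) (by omega)
        rw [hv4] at hne
        unfold shiftF; split_ifs <;> omega
  · rw [boxSum_origin, boxSum_origin]
    omega

lemma commute13 {a1 a3 c : CPerm} (h1 : a1.IsValid) (h3 : a3.IsValid) (hc : c.IsValid)
    (hl1 : 1 ≤ a1.len) (hl3 : 1 ≤ a3.len)
    (hq1 : a1.OneQuadrant 1) (hq3 : a3.OneQuadrant 3) :
    boxSum a1 (boxSum a3 c) = boxSum a3 (boxSum a1 c) := by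
  rw [← boxSum_assoc h1.length_pos h3 hc, boxSum_swap13 h1 h3 hl1 hl3 hq1 hq3,
    boxSum_assoc h3.length_pos h1 hc]

lemma commute24 {a2 a4 c : CPerm} (h2 : a2.IsValid) (h4 : a4.IsValid) (hc : c.IsValid)
    (hl2 : 1 ≤ a2.len) (hl4 : 1 ≤ a4.len)
    (hq2 : a2.OneQuadrant 2) (hq4 : a4.OneQuadrant 4) :
    boxSum a2 (boxSum a4 c) = boxSum a4 (boxSum a2 c) := by
  rw [← boxSum_assoc h2.length_pos h4 hc, boxSum_swap24 h2 h4 hl2 hl4 hq2 hq4,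
    boxSum_assoc h4.length_pos h2 hc]

end CPerm

namespace CPerm

lemma split_right {p a b a' b' : CPerm} (hp : p.IsValid)
    (ha : a.IsValid) (hb : b.IsValid) (hab : boxSum a b = p)
    (ha' : a'.IsValid) (hb' : b'.IsValid) (hab' : boxSum a' b' = p)
    (hm2 : 2 ≤ a.vals.length) (hm2' : 2 ≤ a'.vals.length)
    (hsR : b.origin = p.origin)
    (hsL : b'.origin + a'.vals.length = p.origin + 1)
    (hvc : (b.originVal = p.originVal ∧ b'.originVal + a'.vals.length = p.originVal + 1) ∨
           (b.originVal + a.vals.length = p.originVal + 1 ∧ b'.originVal = p.originVal)) :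
    ∃ c, c.IsValid ∧ boxSum a' c = b := by
  have hN := dec_len hb hab
  have hN' := dec_len hb' hab'
  have hor := dec_origin hab
  have hor' := dec_origin hab'
  have hbo := hb.origin_lt
  have hbo' := hb'.origin_lt
  have hsmN : b.origin + a.vals.length ≤ p.vals.length := by
    rw [← hab]; exact dec_s_m_le ha hb
  have hmid' := dec_mid hb' hab'
  have hwin' := dec_window ha' hb' hab'
  have hbeq : contract p b.origin a.vals.length b.originVal = b := by
    have := dec_contract ha hb; rwa [hab] at this
  have hbL : ∀ j, j < b.origin → b.valAt j = unshiftF b.originVal a.vals.length (p.valAt j) := by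
    intro j hj
    have h := contract_valAt_left (p := p) (s := b.origin) (m := a.vals.length)
      b.originVal hsmN hj
    rw [hbeq] at h
    exact h
  have hne0 : ∀ i, i < a'.vals.length - 1 → p.valAt (b'.origin + i) ≠ p.originVal := by
    intro i hi heq
    have := hp.valAt_inj (i := b'.origin + i) (j := p.origin) (by omega) hp.origin_lt
      (by rw [heq]; rfl)
    omega
  have hvOrig : p.originVal = a.valAt a.origin + b.originVal := by
    have := dec_mid hb hab a.origin ha.origin_lt
    rw [show b.origin + a.origin = p.origin by omega, ← originVal_def] at this
    exact this
  have hvOrig' : p.originVal = a'.valAt a'.origin + b'.originVal := by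
    have := dec_mid hb' hab' a'.origin ha'.origin_lt
    rw [show b'.origin + a'.origin = p.origin by omega, ← originVal_def] at this
    exact this
  obtain ⟨w0, hmidB⟩ : ∃ w0, ∀ i, i < a'.vals.length →
      b.valAt (b'.origin + i) = a'.valAt i + w0 := by
    rcases hvc with ⟨hA1, hA2⟩ | ⟨hB1, hB2⟩
    · refine ⟨b'.originVal, fun i hi => ?_⟩
      rcases Nat.lt_or_ge i (a'.vals.length - 1) with h | h
      · have he := hmid' i hi
        have hw := hwin' i hi
        have hne := hne0 i h
        have hlt : b'.origin + i < b.origin := by omega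
        rw [hbL _ hlt, he]
        unfold unshiftF; split_ifs <;> omega
      · have hieq : i = a'.vals.length - 1 := by omega
        have hioeq : a'.origin = a'.vals.length - 1 := by omega
        rw [hieq, show b'.origin + (a'.vals.length - 1) = b.origin by omega, ← originVal_def]
        rw [← hioeq]
        omega
    · refine ⟨b.originVal, fun i hi => ?_⟩
      rcases Nat.lt_or_ge i (a'.vals.length - 1) with h | h
      · have he := hmid' i hi
        have hw := hwin' i hi
        have hne := hne0 i h
        have hlt : b'.origin + i < b.origin := by omega
        rw [hbL _ hlt, he]
        unfold unshiftF; split_ifs <;> omega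
      · have hieq : i = a'.vals.length - 1 := by omega
        have hioeq : a'.origin = a'.vals.length - 1 := by omega
        rw [hieq, show b'.origin + (a'.vals.length - 1) = b.origin by omega, ← originVal_def]
        rw [← hioeq]
        omega
  have hwB : ∀ i, i < a'.vals.length →
      w0 ≤ b.valAt (b'.origin + i) ∧ b.valAt (b'.origin + i) < w0 + a'.vals.length := by
    intro i hi
    rw [hmidB i hi]
    have := ha'.valAt_lt hi
    omega
  have h1 : b'.origin ≤ b.origin := by omega
  have h2 : b.origin < b'.origin + a'.vals.length := by omega
  have h3 : b'.origin + a'.vals.length ≤ b.vals.length := by omega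
  have hm'1 : 1 ≤ a'.vals.length := by omega
  have hcv := contract_isValid hb hm'1 h1 h2 h3 hwB
  have hrv := restrict_isValid hb hm'1 h1 h2 h3 hwB
  have hbs := boxSum_restrict_contract hb hm'1 h1 h2 h3 hwB
  refine ⟨contract b b'.origin a'.vals.length w0, hcv, ?_⟩
  have hxa : restrict b b'.origin a'.vals.length w0 = a' := by
    refine cperm_ext ?_ ?_ ?_
    · rw [restrict_length _ h3]
    · intro i hi
      rw [restrict_length _ h3] at hi
      rw [restrict_valAt _ h3 hi, hmidB i hi]
      omega
    · rw [restrict_origin]; omega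
  have := hbs; rw [hxa] at this; exact this

lemma split_left {p a b a' b' : CPerm} (hp : p.IsValid)
    (ha : a.IsValid) (hb : b.IsValid) (hab : boxSum a b = p)
    (ha' : a'.IsValid) (hb' : b'.IsValid) (hab' : boxSum a' b' = p)
    (hm2 : 2 ≤ a.vals.length) (hm2' : 2 ≤ a'.vals.length)
    (hsR : b.origin = p.origin)
    (hsL : b'.origin + a'.vals.length = p.origin + 1)
    (hvc : (b.originVal = p.originVal ∧ b'.originVal + a'.vals.length = p.originVal + 1) ∨
           (b.originVal + a.vals.length = p.originVal + 1 ∧ b'.originVal = p.originVal)) :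
    ∃ c, c.IsValid ∧ boxSum a c = b' := by
  have hN := dec_len hb hab
  have hN' := dec_len hb' hab'
  have hor := dec_origin hab
  have hor' := dec_origin hab'
  have hbo := hb.origin_lt
  have hbo' := hb'.origin_lt
  have hsmN' : b'.origin + a'.vals.length ≤ p.vals.length := by
    rw [← hab']; exact dec_s_m_le ha' hb'
  have hmid := dec_mid hb hab
  have hwin := dec_window ha hb hab
  have hbeq : contract p b'.origin a'.vals.length b'.originVal = b' := by
    have := dec_contract ha' hb'; rwa [hab'] at this
  have hbR : ∀ k, b'.origin + a'.vals.length + k < p.vals.length →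
      b'.valAt (b'.origin + 1 + k) =
        unshiftF b'.originVal a'.vals.length (p.valAt (b'.origin + a'.vals.length + k)) := by
    intro k hk
    have h := contract_valAt_right (p := p) (s := b'.origin) (m := a'.vals.length)
      (k := k) b'.originVal hk
    rw [hbeq] at h
    exact h
  have hne0 : ∀ k, 1 ≤ k → k < a.vals.length → p.valAt (p.origin + k) ≠ p.originVal := by
    intro k hk1 hk2 heq
    have := hp.valAt_inj (i := p.origin + k) (j := p.origin) (by omega) hp.origin_lt
      (by rw [heq]; rfl)
    omega
  have hvOrig : p.originVal = a.valAt a.origin + b.originVal := by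
    have := dec_mid hb hab a.origin ha.origin_lt
    rw [show b.origin + a.origin = p.origin by omega, ← originVal_def] at this
    exact this
  have haor : a.origin = 0 := by omega
  obtain ⟨w0, hmidB⟩ : ∃ w0, ∀ k, k < a.vals.length →
      b'.valAt (b'.origin + k) = a.valAt k + w0 := by
    rcases hvc with ⟨hA1, hA2⟩ | ⟨hB1, hB2⟩
    · refine ⟨b'.originVal, fun k hk => ?_⟩
      rcases Nat.eq_zero_or_pos k with rfl | hk1
      · rw [Nat.add_zero, ← originVal_def, ← haor]
        omega
      · have he := hmid k hk
        rw [hsR] at he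
        have hw := hwin k hk
        rw [hsR] at hw
        have hne := hne0 k hk1 hk
        have hidx : b'.origin + k = b'.origin + 1 + (k - 1) := by omega
        have hidx2 : b'.origin + a'.vals.length + (k - 1) = p.origin + k := by omega
        rw [hidx, hbR (k - 1) (by omega), hidx2, he]
        unfold unshiftF; split_ifs <;> omega
    · refine ⟨b.originVal, fun k hk => ?_⟩
      rcases Nat.eq_zero_or_pos k with rfl | hk1
      · rw [Nat.add_zero, ← originVal_def, ← haor]
        omega
      · have he := hmid k hk
        rw [hsR] at he
        have hw := hwin k hk
        rw [hsR] at hw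
        have hne := hne0 k hk1 hk
        have hidx : b'.origin + k = b'.origin + 1 + (k - 1) := by omega
        have hidx2 : b'.origin + a'.vals.length + (k - 1) = p.origin + k := by omega
        rw [hidx, hbR (k - 1) (by omega), hidx2, he]
        unfold unshiftF; split_ifs <;> omega
  have hwB : ∀ k, k < a.vals.length →
      w0 ≤ b'.valAt (b'.origin + k) ∧ b'.valAt (b'.origin + k) < w0 + a.vals.length := by
    intro k hk
    rw [hmidB k hk]
    have := ha.valAt_lt hk
    omega
  have h1 : b'.origin ≤ b'.origin := le_refl _
  have h2 : b'.origin < b'.origin + a.vals.length := by omega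
  have h3 : b'.origin + a.vals.length ≤ b'.vals.length := by omega
  have hm1 : 1 ≤ a.vals.length := by omega
  have hcv := contract_isValid hb' hm1 h1 h2 h3 hwB
  have hrv := restrict_isValid hb' hm1 h1 h2 h3 hwB
  have hbs := boxSum_restrict_contract hb' hm1 h1 h2 h3 hwB
  refine ⟨contract b' b'.origin a.vals.length w0, hcv, ?_⟩
  have hxa : restrict b' b'.origin a.vals.length w0 = a := by
    refine cperm_ext ?_ ?_ ?_
    · rw [restrict_length _ h3]
    · intro i hi
      rw [restrict_length _ h3] at hi
      rw [restrict_valAt _ h3 hi, hmidB i hi]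
      omega
    · rw [restrict_origin]; omega
  have := hbs; rw [hxa] at this; exact this

end CPerm

namespace CPerm

def DecSet (p : CPerm) : Set (CPerm × CPerm) :=
  {d | d.1.IsValid ∧ d.2.IsValid ∧ d.1.BoxIndecomposable ∧ boxSum d.1 d.2 = p}

def TripSet (q q' : ℕ) (p : CPerm) : Set (CPerm × CPerm × CPerm) :=
  {t | t.1.IsValid ∧ t.2.1.IsValid ∧ t.2.2.IsValid ∧ t.1.BoxIndecomposable ∧
    t.2.1.BoxIndecomposable ∧ t.1.OneQuadrant q ∧ t.2.1.OneQuadrant q' ∧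
    boxSum t.1 (boxSum t.2.1 t.2.2) = p}

lemma exists_dec : ∀ n (p : CPerm), p.vals.length ≤ n → p.IsValid → 1 ≤ p.len →
    ∃ a b, (a, b) ∈ DecSet p := by
  intro n
  induction n with
  | zero =>
    intro p hpn hp hl
    have := hp.length_pos
    omega
  | succ n ih =>
    intro p hpn hp hl
    by_cases hind : p.BoxIndecomposable
    · exact ⟨p, trivial, hp, trivial_isValid, hind, boxSum_trivial p⟩
    · unfold BoxIndecomposable at hind
      push_neg at hind
      obtain ⟨x, y, hx, hy, hlx, hly, hxy⟩ := hind hl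
      have hlen := dec_len hy hxy
      have hly2 := hy.two_le_vals hly
      have hlp : 2 ≤ p.vals.length := hp.two_le_vals hl
      have hxlt : x.vals.length ≤ n := by omega
      obtain ⟨a, b, ha, hb, hai, hab⟩ := ih x hxlt hx hlx
      refine ⟨a, boxSum b y, ha, boxSum_isValid hb hy, hai, ?_⟩
      rw [← boxSum_assoc ha.length_pos hb hy, hab, hxy]

lemma dec_originVal_eq {p a b : CPerm} (ha : a.IsValid) (hb : b.IsValid)
    (hab : boxSum a b = p) : p.originVal = a.originVal + b.originVal := by
  have := dec_mid hb hab a.origin ha.origin_lt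
  rw [show b.origin + a.origin = p.origin from (dec_origin hab).symm, ← originVal_def] at this
  exact this

def CrossRel (p a b a' b' : CPerm) : Prop :=
  b.origin = p.origin ∧ b'.origin + a'.vals.length = p.origin + 1 ∧
  ((b.originVal = p.originVal ∧ b'.originVal + a'.vals.length = p.originVal + 1 ∧
      a.OneQuadrant 1 ∧ a'.OneQuadrant 3) ∨
   (b.originVal + a.vals.length = p.originVal + 1 ∧ b'.originVal = p.originVal ∧
      a.OneQuadrant 4 ∧ a'.OneQuadrant 2))

lemma decs_classify {p a b a' b' : CPerm} (hp : p.IsValid)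
    (hd : (a, b) ∈ DecSet p) (hd' : (a', b') ∈ DecSet p)
    (hne : (a, b) ≠ (a', b')) :
    CrossRel p a b a' b' ∨ CrossRel p a' b' a b := by
  have hd1 := hd
  have hd1' := hd'
  simp only [DecSet, Set.mem_setOf_eq] at hd1 hd1'
  obtain ⟨ha, hb, hai, hab⟩ := hd1
  obtain ⟨ha', hb', hai', hab'⟩ := hd1'
  have hm2 : 2 ≤ a.vals.length := ha.two_le_vals hai.1
  have hm2' : 2 ≤ a'.vals.length := ha'.two_le_vals hai'.1
  have hwne : ¬(b.origin = b'.origin ∧ a.vals.length = a'.vals.length) := by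
    rintro ⟨h1, h2⟩
    obtain ⟨e1, e2⟩ := dec_unique ha hb ha' hb' (by rw [hab, hab']) h1 h2
    exact hne (Prod.ext e1 e2)
  obtain ⟨hx1, hx2, hx3, hx4⟩ := windows_cross hp ha hb hai hab ha' hb' hai' hab' hwne
  have hor := dec_origin hab
  have hor' := dec_origin hab'
  have hov := dec_originVal_eq ha hb hab
  have hov' := dec_originVal_eq ha' hb' hab'
  have hbound := ha.originVal_lt
  have hbound' := ha'.originVal_lt
  have hao := ha.origin_lt
  have hao' := ha'.origin_lt
  -- exactly one of the two windows is "right" (starts at the origin)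
  rcases Nat.lt_or_ge b.origin b'.origin with hcase | hcase
  · -- b'.origin = p.origin : a' is right, a is left
    right
    have hs1 : b'.origin = p.origin := by omega
    have hs2 : b.origin + a.vals.length = p.origin + 1 := by omega
    refine ⟨hs1, hs2, ?_⟩
    rcases Nat.lt_or_ge b'.originVal b.originVal with hv | hv
    · -- b.originVal = p.originVal : a' gets value case B
      have hv1 : b.originVal = p.originVal := by omega
      have hv2 : b'.originVal + a'.vals.length = p.originVal + 1 := by omega
      refine Or.inr ⟨hv2, hv1, ?_, ?_⟩
      · exact (oneQuadrant_4_iff ha' hai'.1).mpr ⟨by omega, by omega⟩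
      · exact (oneQuadrant_2_iff ha hai.1).mpr ⟨by omega, by omega⟩
    · have hv1 : b'.originVal = p.originVal := by omega
      have hv2 : b.originVal + a.vals.length = p.originVal + 1 := by omega
      refine Or.inl ⟨hv1, hv2, ?_, ?_⟩
      · exact (oneQuadrant_1_iff ha' hai'.1).mpr ⟨by omega, by omega⟩
      · exact (oneQuadrant_3_iff ha hai.1).mpr ⟨by omega, by omega⟩
  · -- b.origin = p.origin : a is right, a' is left
    left
    have hs1 : b.origin = p.origin := by omega
    have hs2 : b'.origin + a'.vals.length = p.origin + 1 := by omega
    refine ⟨hs1, hs2, ?_⟩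
    rcases Nat.lt_or_ge b.originVal b'.originVal with hv | hv
    · have hv1 : b'.originVal = p.originVal := by omega
      have hv2 : b.originVal + a.vals.length = p.originVal + 1 := by omega
      refine Or.inr ⟨hv2, hv1, ?_, ?_⟩
      · exact (oneQuadrant_4_iff ha hai.1).mpr ⟨by omega, by omega⟩
      · exact (oneQuadrant_2_iff ha' hai'.1).mpr ⟨by omega, by omega⟩
    · have hv1 : b.originVal = p.originVal := by omega
      have hv2 : b'.originVal + a'.vals.length = p.originVal + 1 := by omega
      refine Or.inl ⟨hv1, hv2, ?_, ?_⟩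
      · exact (oneQuadrant_1_iff ha hai.1).mpr ⟨by omega, by omega⟩
      · exact (oneQuadrant_3_iff ha' hai'.1).mpr ⟨by omega, by omega⟩

lemma decs_same_quad {p a b a' b' : CPerm} {q : ℕ} (hp : p.IsValid)
    (hd : (a, b) ∈ DecSet p) (hd' : (a', b') ∈ DecSet p)
    (hqa : a.OneQuadrant q) (hqa' : a'.OneQuadrant q)
    (hq : q = 1 ∨ q = 2 ∨ q = 3 ∨ q = 4) :
    (a, b) = (a', b') := by
  by_contra hne
  have ha : a.IsValid := hd.1
  have ha' : a'.IsValid := hd'.1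
  have hla : 1 ≤ a.len := hd.2.2.1.1
  have hla' : 1 ≤ a'.len := hd'.2.2.1.1
  rcases decs_classify hp hd hd' hne with ⟨_, _, hcr⟩ | ⟨_, _, hcr⟩ <;>
    rcases hcr with ⟨_, _, hA, hA'⟩ | ⟨_, _, hB, hB'⟩
  · rcases hq with rfl | rfl | rfl | rfl
    · exact oneQuadrant_ne (q := 1) (q' := 3) ha' hla' hqa' hA' (by norm_num) (by norm_num) (by norm_num)
    · exact oneQuadrant_ne (q := 2) (q' := 1) ha hla hqa hA (by norm_num) (by norm_num) (by norm_num)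
    · exact oneQuadrant_ne (q := 3) (q' := 1) ha hla hqa hA (by norm_num) (by norm_num) (by norm_num)
    · exact oneQuadrant_ne (q := 4) (q' := 1) ha hla hqa hA (by norm_num) (by norm_num) (by norm_num)
  · rcases hq with rfl | rfl | rfl | rfl
    · exact oneQuadrant_ne (q := 1) (q' := 4) ha hla hqa hB (by norm_num) (by norm_num) (by norm_num)
    · exact oneQuadrant_ne (q := 2) (q' := 4) ha hla hqa hB (by norm_num) (by norm_num) (by norm_num)
    · exact oneQuadrant_ne (q := 3) (q' := 4) ha hla hqa hB (by norm_num) (by norm_num) (by norm_num)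
    · exact oneQuadrant_ne (q := 4) (q' := 2) ha' hla' hqa' hB' (by norm_num) (by norm_num) (by norm_num)
  · rcases hq with rfl | rfl | rfl | rfl
    · exact oneQuadrant_ne (q := 1) (q' := 3) ha hla hqa hA' (by norm_num) (by norm_num) (by norm_num)
    · exact oneQuadrant_ne (q := 2) (q' := 3) ha hla hqa hA' (by norm_num) (by norm_num) (by norm_num)
    · exact oneQuadrant_ne (q := 3) (q' := 1) ha' hla' hqa' hA (by norm_num) (by norm_num) (by norm_num)
    · exact oneQuadrant_ne (q := 4) (q' := 3) ha hla hqa hA' (by norm_num) (by norm_num) (by norm_num)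
  · rcases hq with rfl | rfl | rfl | rfl
    · exact oneQuadrant_ne (q := 1) (q' := 2) ha hla hqa hB' (by norm_num) (by norm_num) (by norm_num)
    · exact oneQuadrant_ne (q := 2) (q' := 4) ha' hla' hqa' hB (by norm_num) (by norm_num) (by norm_num)
    · exact oneQuadrant_ne (q := 3) (q' := 2) ha hla hqa hB' (by norm_num) (by norm_num) (by norm_num)
    · exact oneQuadrant_ne (q := 4) (q' := 2) ha hla hqa hB' (by norm_num) (by norm_num) (by norm_num)

end CPerm

namespace CPerm

lemma trip13_to_decs {p a1 a3 c : CPerm} (ht : (a1, a3, c) ∈ TripSet 1 3 p) :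
    (a1, boxSum a3 c) ∈ DecSet p ∧ (a3, boxSum a1 c) ∈ DecSet p ∧ a1 ≠ a3 := by
  have ht' := ht
  simp only [TripSet, Set.mem_setOf_eq] at ht'
  obtain ⟨h1, h3, hc, hi1, hi3, hq1, hq3, heq⟩ := ht'
  refine ⟨⟨h1, boxSum_isValid h3 hc, hi1, heq⟩, ⟨h3, boxSum_isValid h1 hc, hi3, ?_⟩, ?_⟩
  · rw [← commute13 h1 h3 hc hi1.1 hi3.1 hq1 hq3]; exact heq
  · rintro rfl
    exact oneQuadrant_ne (q := 1) (q' := 3) h1 hi1.1 hq1 hq3 (by norm_num) (by norm_num)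
      (by norm_num)

lemma trip24_to_decs {p a2 a4 c : CPerm} (ht : (a2, a4, c) ∈ TripSet 2 4 p) :
    (a2, boxSum a4 c) ∈ DecSet p ∧ (a4, boxSum a2 c) ∈ DecSet p ∧ a2 ≠ a4 := by
  have ht' := ht
  simp only [TripSet, Set.mem_setOf_eq] at ht'
  obtain ⟨h2, h4, hc, hi2, hi4, hq2, hq4, heq⟩ := ht'
  refine ⟨⟨h2, boxSum_isValid h4 hc, hi2, heq⟩, ⟨h4, boxSum_isValid h2 hc, hi4, ?_⟩, ?_⟩
  · rw [← commute24 h2 h4 hc hi2.1 hi4.1 hq2 hq4]; exact heq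
  · rintro rfl
    exact oneQuadrant_ne (q := 2) (q' := 4) h2 hi2.1 hq2 hq4 (by norm_num) (by norm_num)
      (by norm_num)

lemma dec_first_quad_opp {p x y a b : CPerm} {qa qx : ℕ} (hp : p.IsValid)
    (hdx : (x, y) ∈ DecSet p) (hd : (a, b) ∈ DecSet p) (hne : (x, y) ≠ (a, b))
    (hqa : a.OneQuadrant qa) (hopp : OppositeQuadrants qa qx) :
    x.OneQuadrant qx := by
  have haV : a.IsValid := hd.1
  have hlaV : 1 ≤ a.len := hd.2.2.1.1
  rcases hopp with ⟨rfl, rfl⟩ | ⟨rfl, rfl⟩ | ⟨rfl, rfl⟩ | ⟨rfl, rfl⟩ <;>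
    rcases decs_classify hp hdx hd hne with
      ⟨_, _, ⟨_, _, hA, hA'⟩ | ⟨_, _, hA, hA'⟩⟩ | ⟨_, _, ⟨_, _, hA, hA'⟩ | ⟨_, _, hA, hA'⟩⟩ <;>
    first
      | assumption
      | exact (oneQuadrant_ne haV hlaV hqa hA' (by norm_num) (by norm_num) (by norm_num)).elim
      | exact (oneQuadrant_ne haV hlaV hqa hA (by norm_num) (by norm_num) (by norm_num)).elim

lemma master_two {p a b a' b' : CPerm} (hp : p.IsValid)
    (hd : (a, b) ∈ DecSet p) (hd' : (a', b') ∈ DecSet p)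
    (hcr : CrossRel p a b a' b') :
    (DecSet p).ncard = 1 + (TripSet 1 3 p).ncard + (TripSet 2 4 p).ncard := by
  have ha : a.IsValid := hd.1
  have hb : b.IsValid := hd.2.1
  have hai : a.BoxIndecomposable := hd.2.2.1
  have hab : boxSum a b = p := hd.2.2.2
  have ha' : a'.IsValid := hd'.1
  have hb' : b'.IsValid := hd'.2.1
  have hai' : a'.BoxIndecomposable := hd'.2.2.1
  have hab' : boxSum a' b' = p := hd'.2.2.2
  have hm2 : 2 ≤ a.vals.length := ha.two_le_vals hai.1
  have hm2' : 2 ≤ a'.vals.length := ha'.two_le_vals hai'.1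
  obtain ⟨hs1, hs2, hvc⟩ := hcr
  rcases hvc with ⟨hv1, hv2, hqa, hqa'⟩ | ⟨hv1, hv2, hqa, hqa'⟩
  · -- a in quadrant 1, a' in quadrant 3
    have hne_aa' : a ≠ a' := by
      rintro rfl
      exact oneQuadrant_ne (q := 1) (q' := 3) ha hai.1 hqa hqa' (by norm_num) (by norm_num)
        (by norm_num)
    have hne_dd' : (a, b) ≠ (a', b') := by
      intro h; exact hne_aa' (congrArg Prod.fst h)
    obtain ⟨c, hcv, hce⟩ := split_right hp ha hb hab ha' hb' hab' hm2 hm2' hs1 hs2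
      (Or.inl ⟨hv1, hv2⟩)
    have ht : (a, a', c) ∈ TripSet 1 3 p :=
      ⟨ha, ha', hcv, hai, hai', hqa, hqa', by rw [hce]; exact hab⟩
    have hD : DecSet p = {(a, b), (a', b')} := by
      apply Set.eq_of_subset_of_subset
      · rintro ⟨x, y⟩ hdx
        by_contra hmem
        simp only [Set.mem_insert_iff, Set.mem_singleton_iff] at hmem
        push_neg at hmem
        have hx3 := dec_first_quad_opp hp hdx hd hmem.1 hqa (Or.inl ⟨rfl, rfl⟩)
        have hx1 := dec_first_quad_opp hp hdx hd' hmem.2 hqa' (Or.inr (Or.inl ⟨rfl, rfl⟩))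
        have hxv : x.IsValid := hdx.1
        have hxl : 1 ≤ x.len := hdx.2.2.1.1
        exact oneQuadrant_ne (q := 1) (q' := 3) hxv hxl hx1 hx3 (by norm_num) (by norm_num)
          (by norm_num)
      · rintro d'' hmem
        simp only [Set.mem_insert_iff, Set.mem_singleton_iff] at hmem
        rcases hmem with rfl | rfl
        · exact hd
        · exact hd'
    have hT13 : TripSet 1 3 p = {(a, a', c)} := by
      apply Set.eq_of_subset_of_subset
      · rintro ⟨x1, x3, y⟩ ht'
        obtain ⟨m1, m2, hnex⟩ := trip13_to_decs ht'
        have hq1x : x1.OneQuadrant 1 := ht'.2.2.2.2.2.1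
        have hq3x : x3.OneQuadrant 3 := ht'.2.2.2.2.2.2.1
        have e1 := decs_same_quad (q := 1) hp m1 hd hq1x hqa (by norm_num)
        have hx1a : x1 = a := congrArg Prod.fst e1
        have hx3y : boxSum x3 y = b := congrArg Prod.snd e1
        have hm3 : (x3, y) ∈ DecSet b :=
          ⟨ht'.2.1, ht'.2.2.1, ht'.2.2.2.2.1, hx3y⟩
        have hm3' : (a', c) ∈ DecSet b := ⟨ha', hcv, hai', hce⟩
        have e2 := decs_same_quad (q := 3) hb hm3 hm3' hq3x hqa' (by norm_num)
        have hx3a : x3 = a' := congrArg Prod.fst e2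
        have hyc : y = c := congrArg Prod.snd e2
        simp only [Set.mem_singleton_iff, Prod.mk.injEq]
        exact ⟨hx1a, hx3a, hyc⟩
      · rintro t'' hmem
        rw [Set.mem_singleton_iff] at hmem
        rw [hmem]; exact ht
    have hT24 : TripSet 2 4 p = ∅ := by
      rw [Set.eq_empty_iff_forall_notMem]
      rintro ⟨x2, x4, y⟩ ht'
      obtain ⟨m1, m2, hnex⟩ := trip24_to_decs ht'
      have hq2x : x2.OneQuadrant 2 := ht'.2.2.2.2.2.1
      have hx2v : x2.IsValid := ht'.1
      have hx2l : 1 ≤ x2.len := ht'.2.2.2.1.1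
      have : (x2, boxSum x4 y) ∈ ({(a, b), (a', b')} : Set (CPerm × CPerm)) := by
        rw [← hD]; exact m1
      simp only [Set.mem_insert_iff, Set.mem_singleton_iff, Prod.mk.injEq] at this
      rcases this with ⟨rfl, _⟩ | ⟨rfl, _⟩
      · exact oneQuadrant_ne (q := 2) (q' := 1) hx2v hx2l hq2x hqa (by norm_num) (by norm_num)
          (by norm_num)
      · exact oneQuadrant_ne (q := 2) (q' := 3) hx2v hx2l hq2x hqa' (by norm_num) (by norm_num)
          (by norm_num)
    rw [hD, hT13, hT24]
    rw [Set.ncard_pair hne_dd', Set.ncard_singleton, Set.ncard_empty]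
  · -- a in quadrant 4, a' in quadrant 2
    have hne_aa' : a ≠ a' := by
      rintro rfl
      exact oneQuadrant_ne (q := 4) (q' := 2) ha hai.1 hqa hqa' (by norm_num) (by norm_num)
        (by norm_num)
    have hne_dd' : (a, b) ≠ (a', b') := by
      intro h; exact hne_aa' (congrArg Prod.fst h)
    obtain ⟨c, hcv, hce⟩ := split_left hp ha hb hab ha' hb' hab' hm2 hm2' hs1 hs2
      (Or.inr ⟨hv1, hv2⟩)
    have ht : (a', a, c) ∈ TripSet 2 4 p :=
      ⟨ha', ha, hcv, hai', hai, hqa', hqa, by rw [hce]; exact hab'⟩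
    have hD : DecSet p = {(a, b), (a', b')} := by
      apply Set.eq_of_subset_of_subset
      · rintro ⟨x, y⟩ hdx
        by_contra hmem
        simp only [Set.mem_insert_iff, Set.mem_singleton_iff] at hmem
        push_neg at hmem
        have hx2 := dec_first_quad_opp hp hdx hd hmem.1 hqa
          (Or.inr (Or.inr (Or.inr ⟨rfl, rfl⟩)))
        have hx4 := dec_first_quad_opp hp hdx hd' hmem.2 hqa'
          (Or.inr (Or.inr (Or.inl ⟨rfl, rfl⟩)))
        have hxv : x.IsValid := hdx.1
        have hxl : 1 ≤ x.len := hdx.2.2.1.1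
        exact oneQuadrant_ne (q := 2) (q' := 4) hxv hxl hx2 hx4 (by norm_num) (by norm_num)
          (by norm_num)
      · rintro d'' hmem
        simp only [Set.mem_insert_iff, Set.mem_singleton_iff] at hmem
        rcases hmem with rfl | rfl
        · exact hd
        · exact hd'
    have hT24 : TripSet 2 4 p = {(a', a, c)} := by
      apply Set.eq_of_subset_of_subset
      · rintro ⟨x2, x4, y⟩ ht'
        obtain ⟨m1, m2, hnex⟩ := trip24_to_decs ht'
        have hq2x : x2.OneQuadrant 2 := ht'.2.2.2.2.2.1
        have hq4x : x4.OneQuadrant 4 := ht'.2.2.2.2.2.2.1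
        have e1 := decs_same_quad (q := 2) hp m1 hd' hq2x hqa' (by norm_num)
        have hx2a : x2 = a' := congrArg Prod.fst e1
        have hx4y : boxSum x4 y = b' := congrArg Prod.snd e1
        have hm3 : (x4, y) ∈ DecSet b' :=
          ⟨ht'.2.1, ht'.2.2.1, ht'.2.2.2.2.1, hx4y⟩
        have hm3' : (a, c) ∈ DecSet b' := ⟨ha, hcv, hai, hce⟩
        have e2 := decs_same_quad (q := 4) hb' hm3 hm3' hq4x hqa (by norm_num)
        have hx4a : x4 = a := congrArg Prod.fst e2
        have hyc : y = c := congrArg Prod.snd e2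
        simp only [Set.mem_singleton_iff, Prod.mk.injEq]
        exact ⟨hx2a, hx4a, hyc⟩
      · rintro t'' hmem
        rw [Set.mem_singleton_iff] at hmem
        rw [hmem]; exact ht
    have hT13 : TripSet 1 3 p = ∅ := by
      rw [Set.eq_empty_iff_forall_notMem]
      rintro ⟨x1, x3, y⟩ ht'
      obtain ⟨m1, m2, hnex⟩ := trip13_to_decs ht'
      have hq1x : x1.OneQuadrant 1 := ht'.2.2.2.2.2.1
      have hx1v : x1.IsValid := ht'.1
      have hx1l : 1 ≤ x1.len := ht'.2.2.2.1.1
      have : (x1, boxSum x3 y) ∈ ({(a, b), (a', b')} : Set (CPerm × CPerm)) := by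
        rw [← hD]; exact m1
      simp only [Set.mem_insert_iff, Set.mem_singleton_iff, Prod.mk.injEq] at this
      rcases this with ⟨rfl, _⟩ | ⟨rfl, _⟩
      · exact oneQuadrant_ne (q := 1) (q' := 4) hx1v hx1l hq1x hqa (by norm_num) (by norm_num)
          (by norm_num)
      · exact oneQuadrant_ne (q := 1) (q' := 2) hx1v hx1l hq1x hqa' (by norm_num) (by norm_num)
          (by norm_num)
    rw [hD, hT13, hT24]
    rw [Set.ncard_pair hne_dd', Set.ncard_singleton, Set.ncard_empty]

lemma master (p : CPerm) (hp : p.IsValid) (hl : 1 ≤ p.len) :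
    (DecSet p).ncard = 1 + (TripSet 1 3 p).ncard + (TripSet 2 4 p).ncard := by
  obtain ⟨a, b, hd⟩ := exists_dec p.vals.length p le_rfl hp hl
  by_cases hone : ∀ d' ∈ DecSet p, d' = (a, b)
  · have hD : DecSet p = {(a, b)} := Set.eq_singleton_iff_unique_mem.mpr ⟨hd, hone⟩
    have hT13 : TripSet 1 3 p = ∅ := by
      rw [Set.eq_empty_iff_forall_notMem]
      rintro ⟨x1, x3, y⟩ ht'
      obtain ⟨m1, m2, hnex⟩ := trip13_to_decs ht'
      have e1 := hone _ m1
      have e2 := hone _ m2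
      rw [Prod.mk.injEq] at e1 e2
      exact hnex (e1.1.trans e2.1.symm)
    have hT24 : TripSet 2 4 p = ∅ := by
      rw [Set.eq_empty_iff_forall_notMem]
      rintro ⟨x2, x4, y⟩ ht'
      obtain ⟨m1, m2, hnex⟩ := trip24_to_decs ht'
      have e1 := hone _ m1
      have e2 := hone _ m2
      rw [Prod.mk.injEq] at e1 e2
      exact hnex (e1.1.trans e2.1.symm)
    rw [hD, hT13, hT24, Set.ncard_singleton, Set.ncard_empty]
  · push_neg at hone
    obtain ⟨⟨a', b'⟩, hd', hne⟩ := hone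
    rcases decs_classify hp hd' hd hne with hcr | hcr
    · exact master_two hp hd' hd hcr
    · exact master_two hp hd hd' hcr

end CPerm

namespace CPerm

lemma patternLE_left {a b : CPerm} (ha : a.IsValid) (hb : b.IsValid) :
    PatternLE a (boxSum a b) := by
  have hN := boxSum_vals_length (a := a) hb.origin_lt
  have hbo := hb.origin_lt
  refine ⟨fun i => b.origin + i, ?_, ?_, ?_, ?_⟩
  · intro i j _ _ hij; dsimp only; omega
  · intro i hi; dsimp only; omega
  · dsimp only; rw [boxSum_origin]
  · intro i j hi hj
    dsimp only
    rw [boxSum_valAt_mid hi hbo, boxSum_valAt_mid hj hbo]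
    omega

lemma patternLE_right {a b : CPerm} (ha : a.IsValid) (hb : b.IsValid) :
    PatternLE b (boxSum a b) := by
  have hN := boxSum_vals_length (a := a) hb.origin_lt
  have hbo := hb.origin_lt
  have hao := ha.origin_lt
  have hm1 : 1 ≤ a.vals.length := ha.length_pos
  have horig : (boxSum a b).origin = b.origin + a.origin := boxSum_origin a b
  set f : ℕ → ℕ := fun j => if j < b.origin then j else if j = b.origin then
    b.origin + a.origin else j + (a.vals.length - 1) with hf
  have hval : ∀ j, j < b.vals.length → j ≠ b.origin →
      (boxSum a b).valAt (f j) = shiftF b.originVal a.vals.length (b.valAt j) := by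
    intro j hj hjo
    rcases Nat.lt_or_ge j b.origin with h | h
    · rw [hf]; simp only [if_pos h]
      exact boxSum_valAt_left h hbo
    · have h' : b.origin < j := by omega
      rw [hf]; simp only [if_neg (by omega : ¬ j < b.origin), if_neg (by omega : ¬ j = b.origin)]
      have he : j + (a.vals.length - 1) = b.origin + a.vals.length + (j - b.origin - 1) := by
        omega
      rw [he, boxSum_valAt_right (by omega),
        show b.origin + 1 + (j - b.origin - 1) = j by omega]
  have hfb : f b.origin = b.origin + a.origin := by
    simp [hf]
  have hvo : (boxSum a b).valAt (f b.origin) = a.originVal + b.originVal := by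
    rw [hfb, ← horig, ← originVal_def]
    exact dec_originVal_eq ha hb rfl
  refine ⟨f, ?_, ?_, ?_, ?_⟩
  · intro i j hi hj hij
    rw [hf]
    simp only
    split_ifs <;> omega
  · intro i hi
    rw [hf]
    simp only
    split_ifs <;> omega
  · rw [hfb, horig]
  · intro i j hi hj
    have hao' := ha.originVal_lt
    by_cases hio : i = b.origin <;> by_cases hjo : j = b.origin
    · subst hio; subst hjo; omega
    · subst hio
      rw [hvo, hval j hj hjo]
      have hne := valAt_ne_originVal hb hj hjo
      rw [← originVal_def]
      unfold shiftF; split_ifs <;> omega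
    · subst hjo
      rw [hvo, hval i hi hio]
      have hne := valAt_ne_originVal hb hi hio
      rw [← originVal_def]
      unfold shiftF; split_ifs <;> omega
    · rw [hval i hi hio, hval j hj hjo]
      unfold shiftF; split_ifs <;> omega

lemma factors_mem {S : Set CPerm} (hS : IsClass S) {a b : CPerm}
    (ha : a.IsValid) (hb : b.IsValid) (hmem : boxSum a b ∈ S) : a ∈ S ∧ b ∈ S :=
  ⟨hS.2.2 a _ hmem ha (patternLE_left ha hb), hS.2.2 b _ hmem hb (patternLE_right ha hb)⟩

lemma trivial_mem {S : Set CPerm} (hS : IsClass S) : trivial ∈ S := by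
  obtain ⟨q, hq⟩ := hS.1
  have hqv := hS.2.1 q hq
  refine hS.2.2 trivial q hq trivial_isValid ⟨fun _ => q.origin, ?_, ?_, rfl, ?_⟩
  · intro i j hi hj hij
    simp only [trivial, List.length_singleton] at hi hj
    omega
  · intro i _; exact hqv.origin_lt
  · intro i j hi hj
    simp only [trivial, List.length_singleton] at hi hj
    have : i = 0 := by omega
    have : j = 0 := by omega
    subst_vars
    omega

lemma len_zero_eq_trivial {p : CPerm} (hp : p.IsValid) (hl : p.len = 0) : p = trivial := by
  have h1 : p.vals.length = 1 := by
    have := hp.length_pos; unfold len at hl; omega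
  have h2 : p.vals = [0] := by
    have := hp.2.2
    rw [h1] at this
    simpa [List.range_succ] using List.perm_singleton.mp this
  have h3 : p.origin = 0 := by
    have := hp.origin_lt; omega
  cases p
  simp only [trivial, CPerm.mk.injEq]
  exact ⟨h2, h3⟩

lemma count_zero {S : Set CPerm} (hS : IsClass S) : count S 0 = 1 := by
  have : {p | p ∈ S ∧ p.len = 0} = {trivial} := by
    apply Set.eq_of_subset_of_subset
    · rintro p ⟨hp, hl⟩
      exact len_zero_eq_trivial (hS.2.1 p hp) hl
    · rintro p hp
      rw [Set.mem_singleton_iff] at hp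
      subst hp
      exact ⟨trivial_mem hS, rfl⟩
  rw [count, this, Set.ncard_singleton]

lemma finite_valid_len (n : ℕ) : {p : CPerm | p.IsValid ∧ p.vals.length = n}.Finite := by
  have : {p : CPerm | p.IsValid ∧ p.vals.length = n} ⊆
      (fun vo : List ℕ × ℕ => CPerm.mk vo.1 vo.2) ''
        (((List.range n).permutations.toFinset ×ˢ Finset.range n : Finset (List ℕ × ℕ)) :
          Set (List ℕ × ℕ)) := by
    rintro p ⟨hp, hlen⟩
    refine ⟨(p.vals, p.origin), ?_, rfl⟩
    simp only [Finset.coe_product, Set.mem_prod, List.coe_toFinset, Set.mem_setOf_eq,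
      Finset.coe_range, Set.mem_Iio]
    constructor
    · rw [List.mem_permutations]
      rw [← hlen]
      exact hp.2.2
    · rw [← hlen]; exact hp.origin_lt
  exact Set.Finite.subset (Set.Finite.image _ (Finset.finite_toSet _)) this

lemma finite_S_len {S : Set CPerm} (hS : IsClass S) (n : ℕ) :
    {p | p ∈ S ∧ p.len = n}.Finite := by
  apply Set.Finite.subset (finite_valid_len (n + 1))
  rintro p ⟨hp, hl⟩
  have hv := hS.2.1 p hp
  have := hv.length_pos
  unfold len at hl
  exact ⟨hv, by omega⟩

end CPerm

namespace CPerm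

lemma finite_valid_le (n : ℕ) : {p : CPerm | p.IsValid ∧ p.vals.length ≤ n}.Finite := by
  have hsub : {p : CPerm | p.IsValid ∧ p.vals.length ≤ n} ⊆
      ⋃ k ∈ Finset.range (n + 1), {p : CPerm | p.IsValid ∧ p.vals.length = k} := by
    rintro p ⟨hp, hlen⟩
    simp only [Set.mem_iUnion, Finset.mem_range, Set.mem_setOf_eq]
    exact ⟨p.vals.length, by omega, hp, rfl⟩
  exact Set.Finite.subset (Set.Finite.biUnion (Finset.finite_toSet _)
    (fun k _ => finite_valid_len k)) hsub

lemma finite_Pset {S : Set CPerm} (hS : IsClass S) (n : ℕ) :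
    {d : CPerm × CPerm | d.2 ∈ S ∧ d.1 ∈ S ∧ d.1.BoxIndecomposable ∧
      d.1.len + d.2.len = n}.Finite := by
  apply Set.Finite.subset (Set.Finite.prod (finite_valid_le (n + 1)) (finite_valid_le (n + 1)))
  rintro ⟨a, b⟩ ⟨hbS, haS, _, hlen⟩
  have ha := hS.2.1 a haS
  have hb := hS.2.1 b hbS
  have := ha.length_pos
  have := hb.length_pos
  unfold len at hlen
  exact ⟨⟨ha, by omega⟩, ⟨hb, by omega⟩⟩

lemma finite_Tset {S : Set CPerm} (hS : IsClass S) (q q' n : ℕ) :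
    {t : CPerm × CPerm × CPerm | t.2.2 ∈ S ∧ t.1 ∈ S ∧ t.2.1 ∈ S ∧
      t.1.BoxIndecomposable ∧ t.2.1.BoxIndecomposable ∧
      t.1.OneQuadrant q ∧ t.2.1.OneQuadrant q' ∧
      t.1.len + t.2.1.len + t.2.2.len = n}.Finite := by
  apply Set.Finite.subset (Set.Finite.prod (finite_valid_le (n + 1))
    (Set.Finite.prod (finite_valid_le (n + 1)) (finite_valid_le (n + 1))))
  rintro ⟨a, b, c⟩ ⟨hcS, haS, hbS, _, _, _, _, hlen⟩
  have ha := hS.2.1 a haS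
  have hb := hS.2.1 b hbS
  have hc := hS.2.1 c hcS
  have := ha.length_pos
  have := hb.length_pos
  have := hc.length_pos
  unfold len at hlen
  exact ⟨⟨ha, by omega⟩, ⟨hb, by omega⟩, ⟨hc, by omega⟩⟩

end CPerm

namespace CPerm

lemma finite_A {S : Set CPerm} (hS : IsClass S) (k : ℕ) :
    {p : CPerm | p ∈ S ∧ p.BoxIndecomposable ∧ p.len = k}.Finite :=
  (finite_S_len hS k).subset (by rintro p ⟨h1, h2, h3⟩; exact ⟨h1, h3⟩)

lemma finite_Aq {S : Set CPerm} (hS : IsClass S) (q k : ℕ) :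
    {p : CPerm | p ∈ S ∧ p.BoxIndecomposable ∧ p.OneQuadrant q ∧ p.len = k}.Finite :=
  (finite_S_len hS k).subset (by rintro p ⟨h1, h2, h3, h4⟩; exact ⟨h1, h4⟩)

lemma Pset_card {S : Set CPerm} (hS : IsClass S) (n : ℕ) :
    {d : CPerm × CPerm | d.2 ∈ S ∧ d.1 ∈ S ∧ d.1.BoxIndecomposable ∧
      d.1.len + d.2.len = n}.ncard =
    ∑ kl ∈ Finset.HasAntidiagonal.antidiagonal n, count S kl.1 * indecCount S kl.2 := by
  classical
  have hfin := finite_Pset hS n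
  rw [Set.ncard_eq_toFinset_card _ hfin]
  rw [Finset.card_eq_sum_card_fiberwise (f := fun d => (d.2.len, d.1.len))
    (t := Finset.HasAntidiagonal.antidiagonal n) (fun d hd => by
      replace hd : d ∈ hfin.toFinset := hd
      simp only [Set.Finite.mem_toFinset, Set.mem_setOf_eq] at hd
      simp only [Finset.mem_coe, Finset.HasAntidiagonal.mem_antidiagonal]; omega)]
  refine Finset.sum_congr rfl ?_
  intro kl hkl
  rw [Finset.HasAntidiagonal.mem_antidiagonal] at hkl
  have hfe : (hfin.toFinset.filter (fun d => (d.2.len, d.1.len) = kl)) =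
      ((finite_A hS kl.2).toFinset ×ˢ (finite_S_len hS kl.1).toFinset) := by
    ext d
    simp only [Finset.mem_filter, Set.Finite.mem_toFinset, Set.mem_setOf_eq,
      Finset.mem_product, Prod.ext_iff]
    constructor
    · rintro ⟨⟨h1, h2, h3, h4⟩, h5, h6⟩
      exact ⟨⟨h2, h3, h6⟩, ⟨h1, h5⟩⟩
    · rintro ⟨⟨h2, h3, h6⟩, ⟨h1, h5⟩⟩
      exact ⟨⟨h1, h2, h3, by omega⟩, h5, h6⟩
  rw [hfe, Finset.card_product, ← Set.ncard_eq_toFinset_card _ (finite_A hS kl.2),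
    ← Set.ncard_eq_toFinset_card _ (finite_S_len hS kl.1)]
  rw [Nat.mul_comm]
  rfl

lemma Tset_card {S : Set CPerm} (hS : IsClass S) (q q' n : ℕ) :
    {t : CPerm × CPerm × CPerm | t.2.2 ∈ S ∧ t.1 ∈ S ∧ t.2.1 ∈ S ∧
      t.1.BoxIndecomposable ∧ t.2.1.BoxIndecomposable ∧
      t.1.OneQuadrant q ∧ t.2.1.OneQuadrant q' ∧
      t.1.len + t.2.1.len + t.2.2.len = n}.ncard =
    ∑ kl ∈ Finset.HasAntidiagonal.antidiagonal n, count S kl.1 *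
      (∑ ij ∈ Finset.HasAntidiagonal.antidiagonal kl.2, indecQuadCount S q ij.1 * indecQuadCount S q' ij.2) := by
  classical
  have hfin := finite_Tset hS q q' n
  rw [Set.ncard_eq_toFinset_card _ hfin]
  rw [Finset.card_eq_sum_card_fiberwise (f := fun t => (t.2.2.len, t.1.len + t.2.1.len))
    (t := Finset.HasAntidiagonal.antidiagonal n) (fun t ht => by
      replace ht : t ∈ hfin.toFinset := ht
      simp only [Set.Finite.mem_toFinset, Set.mem_setOf_eq] at ht
      simp only [Finset.mem_coe, Finset.HasAntidiagonal.mem_antidiagonal]; omega)]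
  refine Finset.sum_congr rfl ?_
  intro kl hkl
  rw [Finset.HasAntidiagonal.mem_antidiagonal] at hkl
  rw [Finset.card_eq_sum_card_fiberwise (f := fun t => (t.1.len, t.2.1.len))
    (t := Finset.HasAntidiagonal.antidiagonal kl.2) (fun t ht => by
      replace ht : t ∈ hfin.toFinset.filter (fun t => (t.2.2.len, t.1.len + t.2.1.len) = kl) := ht
      simp only [Finset.mem_filter, Set.Finite.mem_toFinset, Set.mem_setOf_eq,
        Prod.ext_iff] at ht
      simp only [Finset.mem_coe, Finset.HasAntidiagonal.mem_antidiagonal]; omega)]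
  have hstep : ∀ ij ∈ Finset.HasAntidiagonal.antidiagonal kl.2,
      ((hfin.toFinset.filter (fun t => (t.2.2.len, t.1.len + t.2.1.len) = kl)).filter
        (fun t => (t.1.len, t.2.1.len) = ij)).card =
      (indecQuadCount S q ij.1 * indecQuadCount S q' ij.2) * count S kl.1 := by
    intro ij hij
    rw [Finset.HasAntidiagonal.mem_antidiagonal] at hij
    rw [Finset.filter_filter]
    have hfe : (hfin.toFinset.filter
        (fun t => (t.2.2.len, t.1.len + t.2.1.len) = kl ∧ (t.1.len, t.2.1.len) = ij)) =
        ((finite_Aq hS q ij.1).toFinset ×ˢ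
          ((finite_Aq hS q' ij.2).toFinset ×ˢ (finite_S_len hS kl.1).toFinset)) := by
      ext t
      simp only [Finset.mem_filter, Set.Finite.mem_toFinset, Set.mem_setOf_eq,
        Finset.mem_product, Prod.ext_iff]
      constructor
      · rintro ⟨⟨h1, h2, h3, h4, h5, h6, h7, h8⟩, ⟨e1, e2⟩, e3, e4⟩
        exact ⟨⟨h2, h4, h6, e3⟩, ⟨h3, h5, h7, e4⟩, ⟨h1, e1⟩⟩
      · rintro ⟨⟨h2, h4, h6, e3⟩, ⟨h3, h5, h7, e4⟩, ⟨h1, e1⟩⟩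
        exact ⟨⟨h1, h2, h3, h4, h5, h6, h7, by omega⟩, ⟨e1, by omega⟩, e3, e4⟩
    rw [hfe, Finset.card_product, Finset.card_product,
      ← Set.ncard_eq_toFinset_card _ (finite_Aq hS q ij.1),
      ← Set.ncard_eq_toFinset_card _ (finite_Aq hS q' ij.2),
      ← Set.ncard_eq_toFinset_card _ (finite_S_len hS kl.1)]
    show indecQuadCount S q ij.1 * (indecQuadCount S q' ij.2 * count S kl.1) = _
    ring
  rw [Finset.sum_congr rfl hstep, ← Finset.sum_mul]
  exact Nat.mul_comm _ _

end CPerm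

namespace CPerm

lemma grand {S : Set CPerm} (hS : IsClass S) (hbox : BoxClosed S) (n : ℕ) :
    count S n +
      {t : CPerm × CPerm × CPerm | t.2.2 ∈ S ∧ t.1 ∈ S ∧ t.2.1 ∈ S ∧
        t.1.BoxIndecomposable ∧ t.2.1.BoxIndecomposable ∧
        t.1.OneQuadrant 1 ∧ t.2.1.OneQuadrant 3 ∧
        t.1.len + t.2.1.len + t.2.2.len = n}.ncard +
      {t : CPerm × CPerm × CPerm | t.2.2 ∈ S ∧ t.1 ∈ S ∧ t.2.1 ∈ S ∧
        t.1.BoxIndecomposable ∧ t.2.1.BoxIndecomposable ∧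
        t.1.OneQuadrant 2 ∧ t.2.1.OneQuadrant 4 ∧
        t.1.len + t.2.1.len + t.2.2.len = n}.ncard =
    (if n = 0 then 1 else 0) +
      {d : CPerm × CPerm | d.2 ∈ S ∧ d.1 ∈ S ∧ d.1.BoxIndecomposable ∧
        d.1.len + d.2.len = n}.ncard := by
  classical
  rcases Nat.eq_zero_or_pos n with rfl | hn
  · rw [count_zero hS, if_pos rfl]
    have e1 : {t : CPerm × CPerm × CPerm | t.2.2 ∈ S ∧ t.1 ∈ S ∧ t.2.1 ∈ S ∧
        t.1.BoxIndecomposable ∧ t.2.1.BoxIndecomposable ∧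
        t.1.OneQuadrant 1 ∧ t.2.1.OneQuadrant 3 ∧
        t.1.len + t.2.1.len + t.2.2.len = 0} = ∅ := by
      rw [Set.eq_empty_iff_forall_notMem]
      rintro t ⟨_, _, _, hi, _, _, _, hlen⟩
      have := hi.1; omega
    have e2 : {t : CPerm × CPerm × CPerm | t.2.2 ∈ S ∧ t.1 ∈ S ∧ t.2.1 ∈ S ∧
        t.1.BoxIndecomposable ∧ t.2.1.BoxIndecomposable ∧
        t.1.OneQuadrant 2 ∧ t.2.1.OneQuadrant 4 ∧
        t.1.len + t.2.1.len + t.2.2.len = 0} = ∅ := by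
      rw [Set.eq_empty_iff_forall_notMem]
      rintro t ⟨_, _, _, hi, _, _, _, hlen⟩
      have := hi.1; omega
    have e3 : {d : CPerm × CPerm | d.2 ∈ S ∧ d.1 ∈ S ∧ d.1.BoxIndecomposable ∧
        d.1.len + d.2.len = 0} = ∅ := by
      rw [Set.eq_empty_iff_forall_notMem]
      rintro d ⟨_, _, hi, hlen⟩
      have := hi.1; omega
    rw [e1, e2, e3]
    simp
  · rw [if_neg (by omega)]
    have hPfin := finite_Pset hS n
    have hT13fin := finite_Tset hS 1 3 n
    have hT24fin := finite_Tset hS 2 4 n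
    have hsnfin := finite_S_len hS n
    have hvalid : ∀ p ∈ S, p.IsValid := hS.2.1
    -- the Pfin fibers are the DecSets
    have hPcard : hPfin.toFinset.card = ∑ p ∈ hsnfin.toFinset, (DecSet p).ncard := by
      rw [Finset.card_eq_sum_card_fiberwise (f := fun d => boxSum d.1 d.2)
        (t := hsnfin.toFinset) (fun d hd => by
          replace hd : d ∈ hPfin.toFinset := hd
          simp only [Finset.mem_coe, Set.Finite.mem_toFinset, Set.mem_setOf_eq] at hd ⊢
          obtain ⟨hbS, haS, hai, hlen⟩ := hd
          have ha := hvalid _ haS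
          have hb := hvalid _ hbS
          refine ⟨hbox _ haS _ hbS, ?_⟩
          rw [len_boxSum hb.origin_lt ha.length_pos]; omega)]
      refine Finset.sum_congr rfl ?_
      intro p hp
      simp only [Set.Finite.mem_toFinset, Set.mem_setOf_eq] at hp
      have hps := hvalid _ hp.1
      have hset : DecSet p =
          ↑(hPfin.toFinset.filter (fun d => boxSum d.1 d.2 = p)) := by
        ext ⟨a, b⟩
        simp only [Finset.coe_filter, Set.Finite.mem_toFinset, Set.mem_setOf_eq, DecSet]
        constructor
        · rintro ⟨ha, hb, hai, hab⟩
          have hmem : boxSum a b ∈ S := by rw [hab]; exact hp.1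
          obtain ⟨haS, hbS⟩ := factors_mem hS ha hb hmem
          have hlen : a.len + b.len = n := by
            rw [← len_boxSum hb.origin_lt ha.length_pos, hab]; exact hp.2
          exact ⟨⟨hbS, haS, hai, hlen⟩, hab⟩
        · rintro ⟨⟨hbS, haS, hai, hlen⟩, hab⟩
          exact ⟨hvalid _ haS, hvalid _ hbS, hai, hab⟩
      rw [hset, Set.ncard_coe_finset]
    have hTcard : ∀ q q', q = 1 ∧ q' = 3 ∨ q = 2 ∧ q' = 4 →
        (finite_Tset hS q q' n).toFinset.card =
          ∑ p ∈ hsnfin.toFinset, (TripSet q q' p).ncard := by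
      intro q q' _
      rw [Finset.card_eq_sum_card_fiberwise
        (f := fun t => boxSum t.1 (boxSum t.2.1 t.2.2))
        (t := hsnfin.toFinset) (fun t ht => by
          replace ht : t ∈ (finite_Tset hS q q' n).toFinset := ht
          simp only [Finset.mem_coe, Set.Finite.mem_toFinset, Set.mem_setOf_eq] at ht ⊢
          obtain ⟨hcS, haS, hbS, hai, hbi, _, _, hlen⟩ := ht
          have ha := hvalid _ haS
          have hb := hvalid _ hbS
          have hc := hvalid _ hcS
          have hbc := boxSum_isValid hb hc
          refine ⟨hbox _ haS _ (hbox _ hbS _ hcS), ?_⟩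
          rw [len_boxSum hbc.origin_lt ha.length_pos, len_boxSum hc.origin_lt hb.length_pos]
          omega)]
      refine Finset.sum_congr rfl ?_
      intro p hp
      simp only [Set.Finite.mem_toFinset, Set.mem_setOf_eq] at hp
      have hset : TripSet q q' p =
          ↑((finite_Tset hS q q' n).toFinset.filter
            (fun t => boxSum t.1 (boxSum t.2.1 t.2.2) = p)) := by
        ext ⟨a, b, c⟩
        simp only [Finset.coe_filter, Set.Finite.mem_toFinset, Set.mem_setOf_eq, TripSet]
        constructor
        · rintro ⟨ha, hb, hc, hai, hbi, hqa, hqb, hab⟩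
          have hmem : boxSum a (boxSum b c) ∈ S := by rw [hab]; exact hp.1
          obtain ⟨haS, hbcS⟩ := factors_mem hS ha (boxSum_isValid hb hc) hmem
          obtain ⟨hbS, hcS⟩ := factors_mem hS hb hc hbcS
          have hbc := boxSum_isValid hb hc
          have hlen : a.len + b.len + c.len = n := by
            have h1 : (boxSum a (boxSum b c)).len = n := by rw [hab]; exact hp.2
            rw [len_boxSum hbc.origin_lt ha.length_pos,
              len_boxSum hc.origin_lt hb.length_pos] at h1
            omega
          exact ⟨⟨hcS, haS, hbS, hai, hbi, hqa, hqb, hlen⟩, hab⟩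
        · rintro ⟨⟨hcS, haS, hbS, hai, hbi, hqa, hqb, hlen⟩, hab⟩
          exact ⟨hvalid _ haS, hvalid _ hbS, hvalid _ hcS, hai, hbi, hqa, hqb, hab⟩
      rw [hset, Set.ncard_coe_finset]
    have hmaster : ∑ p ∈ hsnfin.toFinset, (DecSet p).ncard =
        hsnfin.toFinset.card + (∑ p ∈ hsnfin.toFinset, (TripSet 1 3 p).ncard) +
          ∑ p ∈ hsnfin.toFinset, (TripSet 2 4 p).ncard := by
      rw [Finset.card_eq_sum_ones, ← Finset.sum_add_distrib, ← Finset.sum_add_distrib]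
      refine Finset.sum_congr rfl ?_
      intro p hp
      simp only [Set.Finite.mem_toFinset, Set.mem_setOf_eq] at hp
      exact master p (hvalid _ hp.1) (by omega)
    have hc : count S n = hsnfin.toFinset.card := Set.ncard_eq_toFinset_card _ _
    have e13 := hTcard 1 3 (Or.inl ⟨rfl, rfl⟩)
    have e24 := hTcard 2 4 (Or.inr ⟨rfl, rfl⟩)
    rw [Set.ncard_eq_toFinset_card _ hPfin, hPcard, hmaster,
      Set.ncard_eq_toFinset_card _ hT13fin, e13,
      Set.ncard_eq_toFinset_card _ hT24fin, e24, hc]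
    omega

end CPerm


open PowerSeries in
/-- Generating function specification for a ⊞-closed centred
permutation class: `f(z)·(1 − (g − g₁g₃ − g₂g₄)) = 1`, i.e.
`f = 1/(1 − G)` with `G = g − g₁g₃ − g₂g₄`. -/
theorem genfun_spec_box_closed (S : Set CPerm) (hS : CPerm.IsClass S)
    (hbox : CPerm.BoxClosed S) :
    (PowerSeries.mk fun n => (CPerm.count S n : ℝ)) *
      (1 - ((PowerSeries.mk fun n => (CPerm.indecCount S n : ℝ)) -
        (PowerSeries.mk fun n => (CPerm.indecQuadCount S 1 n : ℝ)) *
          (PowerSeries.mk fun n => (CPerm.indecQuadCount S 3 n : ℝ)) -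
        (PowerSeries.mk fun n => (CPerm.indecQuadCount S 2 n : ℝ)) *
          (PowerSeries.mk fun n => (CPerm.indecQuadCount S 4 n : ℝ)))) = 1 := by
  classical
  set F := PowerSeries.mk fun n => (CPerm.count S n : ℝ) with hF
  set G := PowerSeries.mk fun n => (CPerm.indecCount S n : ℝ) with hG
  set G1 := PowerSeries.mk fun n => (CPerm.indecQuadCount S 1 n : ℝ) with hG1
  set G3 := PowerSeries.mk fun n => (CPerm.indecQuadCount S 3 n : ℝ) with hG3
  set G2 := PowerSeries.mk fun n => (CPerm.indecQuadCount S 2 n : ℝ) with hG2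
  set G4 := PowerSeries.mk fun n => (CPerm.indecQuadCount S 4 n : ℝ) with hG4
  have key : F + F * (G1 * G3) + F * (G2 * G4) = 1 + F * G := by
    ext n
    have hg : CPerm.count S n + _ + _ = _ := CPerm.grand hS hbox n
    have h13 := CPerm.Tset_card hS 1 3 n
    have h24 := CPerm.Tset_card hS 2 4 n
    have hP := CPerm.Pset_card hS n
    rw [h13, h24, hP] at hg
    simp only [map_add, PowerSeries.coeff_mul, PowerSeries.coeff_mk, PowerSeries.coeff_one,
      hF, hG, hG1, hG2, hG3, hG4]
    exact_mod_cast hg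
  have expand : F * (1 - (G - G1 * G3 - G2 * G4)) =
      F + F * (G1 * G3) + F * (G2 * G4) - F * G := by ring
  rw [expand, key]
  ring
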